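/- arXiv:1907.12634 — 10 statements merged into one kernel-verified Lean document; each statement's English description precedes it below -/
import Mathlib

section
/- If f is a monotone graph parameter that is unbounded on the stars K_{1,k}, then every class of graphs that is fractionally f-fragile (at some rate) has bounded maximum degree. Concretely: if f(K_{1,k}) > r(3) and G is fractionally f-fragile at rate r, then the maximum degree of G is at most 3k−3. -/
/-- A graph parameter: a real-valued function on finite graphs. -/
abbrev GraphParam := ∀ (V : Type) [Fintype V], SimpleGraph V → ℝ

/-- `G` is fractionally `f`-fragile at rate `r`: for every positive integer `a`
there is a `(1/a)`-thin probability distribution on subsets `X` of `V(G)`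
supported on sets with `f (G - X) ≤ r a`. -/
def FracFragile (f : GraphParam) {V : Type} [Fintype V] [DecidableEq V]
    (G : SimpleGraph V) (r : ℕ → ℝ) : Prop :=
  ∀ a : ℕ, 0 < a → ∃ P : Finset V → ℝ,
    (∀ X, 0 ≤ P X) ∧ (∑ X : Finset V, P X = 1) ∧
    (∀ X : Finset V, P X ≠ 0 → f _ (G.induce (↑(Xᶜ) : Set V)) ≤ r a) ∧
    (∀ v : V, ∑ X ∈ Finset.univ.filter (fun X : Finset V => v ∈ X), P X ≤ 1 / (a : ℝ))

/-- A graph parameter is monotone if it does not decrease when passing to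
supergraphs, i.e. `f H ≤ f G` whenever `H` is isomorphic to a subgraph of `G`. -/
def MonotoneParam (f : GraphParam) : Prop :=
  ∀ {V W : Type} [Fintype V] [Fintype W] (H : SimpleGraph V) (G : SimpleGraph W)
    (φ : V → W), Function.Injective φ → (∀ u v, H.Adj u v → G.Adj (φ u) (φ v)) →
    f _ H ≤ f _ G

/-!
Let `d = deg v` and take a `1/3`-thin distribution from the definition. Weigh a set `X` by
`(d + 1 - k) [v ∈ X] + |N(v) ∩ X|`; thinness bounds the expected weight by `(2d + 1 - k) / 3`,
which is less than `d + 1 - k` once `d > 2k - 2`. Hence some `X` in the support avoids `v` and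
at least `k` of its neighbours, so `G - X` contains `K_{1,k}` and monotonicity gives
`f(K_{1,k}) ≤ f(G - X) ≤ r 3`. This even bounds the degree by `2k - 2`.
-/

open Finset SimpleGraph

theorem MonotoneParam.mono_of_isContained {f : GraphParam} (hf : MonotoneParam f)
    {V W : Type} [Fintype V] [Fintype W] {H : SimpleGraph V} {G : SimpleGraph W}
    (h : H ⊑ G) : f _ H ≤ f _ G :=
  let ⟨c⟩ := h
  hf H G c c.injective fun _ _ huv => c.toHom.map_adj huv

theorem exists_ne_zero_lt_of_sum_mul_lt {ι : Type*} [Fintype ι] {P w : ι → ℝ} {m : ℝ}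
    (hP0 : ∀ i, 0 ≤ P i) (hP1 : ∑ i, P i = 1) (h : ∑ i, P i * w i < m) :
    ∃ i, P i ≠ 0 ∧ w i < m := by
  rw [← mul_one m, ← hP1, mul_sum] at h
  obtain ⟨i, -, hi⟩ :=
    exists_lt_of_sum_lt (h.trans_eq (sum_congr rfl fun i _ => mul_comm m (P i)))
  have hPi : P i ≠ 0 := by rintro hPi; simp [hPi] at hi
  exact ⟨i, hPi, lt_of_mul_lt_mul_left hi (hP0 i)⟩

theorem completeBipartiteGraph_fin_one_isContained_induce {V : Type} [Fintype V] [DecidableEq V]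
    {G : SimpleGraph V} [DecidableRel G.Adj] {s : Finset V} {v : V} (hv : v ∈ s) {k : ℕ}
    (hk : k ≤ #(G.neighborFinset v ∩ s)) :
    completeBipartiteGraph (Fin 1) (Fin k) ⊑ G.induce (s : Set V) := by
  obtain ⟨T, hT, rfl⟩ := exists_subset_card_eq hk
  refine completeBipartiteGraph_isContained_iff.mpr
    ⟨{⟨v, hv⟩}, T.subtype (· ∈ (s : Set V)), by simp, ?_, ?_⟩
  · rw [card_subtype, filter_true_of_mem fun u hu => mem_coe.mpr (mem_inter.mp (hT hu)).2]
    simp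
  · intro x hx y hy
    rw [coe_singleton, Set.mem_singleton_iff] at hx
    subst hx
    simpa using (mem_inter.mp (hT (mem_subtype.mp hy))).1

def IsThin {V : Type} [Fintype V] [DecidableEq V] (P : Finset V → ℝ) (ε : ℝ) : Prop :=
  ∀ v : V, ∑ X ∈ univ.filter (fun X => v ∈ X), P X ≤ ε

section Thin

variable {V : Type} [Fintype V] [DecidableEq V] {P : Finset V → ℝ} {ε : ℝ}

theorem IsThin.sum_mul_ite_mem_le (hthin : IsThin P ε) (v : V) {c : ℝ} (hc : 0 ≤ c) :
    ∑ X, P X * (if v ∈ X then c else 0) ≤ c * ε := by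
  simp_rw [mul_ite, mul_zero]
  rw [← sum_filter, ← sum_mul, mul_comm]
  exact mul_le_mul_of_nonneg_left (hthin v) hc

theorem IsThin.sum_mul_card_inter_le (hthin : IsThin P ε) (S : Finset V) :
    ∑ X, P X * #(S ∩ X) ≤ #S * ε := by
  calc ∑ X, P X * #(S ∩ X) = ∑ u ∈ S, ∑ X ∈ univ.filter (fun X => u ∈ X), P X := by
        simp_rw [sum_filter, ← filter_mem_eq_inter, card_filter, Nat.cast_sum, mul_sum]
        rw [sum_comm]
        simp
    _ ≤ #S * ε := by
        simpa using sum_le_sum fun u (_ : u ∈ S) => hthin u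

theorem IsThin.exists_notMem_card_inter_lt (hthin : IsThin P ε) (hP0 : ∀ X, 0 ≤ P X)
    (hP1 : ∑ X, P X = 1) (v : V) (S : Finset V) {c : ℝ} (hc : 0 ≤ c) (h : (c + #S) * ε < c) :
    ∃ X, P X ≠ 0 ∧ v ∉ X ∧ (#(S ∩ X) : ℝ) < c := by
  have hmean : ∑ X, P X * ((if v ∈ X then c else 0) + #(S ∩ X)) < c := by
    simp_rw [mul_add, sum_add_distrib]
    linarith [hthin.sum_mul_ite_mem_le v hc, hthin.sum_mul_card_inter_le S]
  obtain ⟨X, hX, hlt⟩ := exists_ne_zero_lt_of_sum_mul_lt hP0 hP1 hmean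
  have hvX : v ∉ X := fun hv => by
    rw [if_pos hv] at hlt
    linarith [Nat.cast_nonneg (α := ℝ) #(S ∩ X)]
  exact ⟨X, hX, hvX, by simpa [hvX] using hlt⟩

theorem IsThin.exists_completeBipartiteGraph_isContained_induce_compl (hthin : IsThin P ε)
    (hP0 : ∀ X, 0 ≤ P X) (hP1 : ∑ X, P X = 1)
    (G : SimpleGraph V) [DecidableRel G.Adj] (v : V) {k : ℕ} (hk : k ≤ G.degree v + 1)
    (hdeg : (2 * G.degree v + 1 - k) * ε < G.degree v + 1 - k) :
    ∃ X, P X ≠ 0 ∧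
      completeBipartiteGraph (Fin 1) (Fin k) ⊑ G.induce (↑(Xᶜ) : Set V) := by
  have hc : (0 : ℝ) ≤ G.degree v + 1 - k := by
    rw [sub_nonneg]; exact_mod_cast hk
  obtain ⟨X, hX, hvX, hlt⟩ :=
    hthin.exists_notMem_card_inter_lt hP0 hP1 v (G.neighborFinset v) hc
      (by rw [card_neighborFinset_eq_degree]; linarith)
  have hsplit := card_inter_add_card_sdiff (G.neighborFinset v) X
  rw [card_neighborFinset_eq_degree, sdiff_eq_inter_compl] at hsplit
  have hlt' : #(G.neighborFinset v ∩ X) + k < G.degree v + 1 := by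
    exact_mod_cast (lt_sub_iff_add_lt.mp hlt)
  exact ⟨X, hX,
    completeBipartiteGraph_fin_one_isContained_induce (mem_compl.mpr hvX) (by omega)⟩

end Thin

theorem frac_fragile_bounded_degree_general (f : GraphParam) (hf : MonotoneParam f)
    (r : ℕ → ℝ) (k : ℕ)
    (hstar : r 3 < f _ (completeBipartiteGraph (Fin 1) (Fin k)))
    {V : Type} [Fintype V] [DecidableEq V] (G : SimpleGraph V) [DecidableRel G.Adj]
    (hG : FracFragile f G r) :
    ∀ v : V, G.degree v ≤ 3 * k - 3 := by
  intro v
  by_contra! hdeg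
  obtain ⟨P, hP0, hP1, hfP, hthin⟩ := hG 3 three_pos
  have hdeg' : (2 * k : ℝ) < G.degree v + 2 := by
    exact_mod_cast (by omega : 2 * k < G.degree v + 2)
  obtain ⟨X, hX, hcont⟩ :=
    IsThin.exists_completeBipartiteGraph_isContained_induce_compl hthin hP0 hP1 G v (k := k)
      (by omega) (by push_cast; linarith)
  exact ((hf.mono_of_isContained hcont).trans (hfP X hX)).not_gt hstar

/-- If `f` is a monotone graph parameter with `f(K_{1,k}) > r 3`, then every graph
that is fractionally `f`-fragile at rate `r` has maximum degree at most `3k - 3`. -/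
theorem frac_fragile_bounded_degree (f : GraphParam) (hf : MonotoneParam f)
    (r : ℕ → ℝ) (hr : Monotone r) (k : ℕ) (hk : 1 ≤ k)
    (hstar : r 3 < f _ (completeBipartiteGraph (Fin 1) (Fin k)))
    {V : Type} [Fintype V] [DecidableEq V] (G : SimpleGraph V) [DecidableRel G.Adj]
    (hG : FracFragile f G r) :
    ∀ v : V, G.degree v ≤ 3 * k - 3 :=
  frac_fragile_bounded_degree_general f hf r k hstar G hG
end

section
/- Let G be a connected chordal graph with an elimination ordering L, and let v be the first vertex of L. Then for every vertex u ≠ v, on any shortest path in G from v to u, the vertex immediately preceding u on the path precedes u in L. -/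
/-- `L` is an elimination ordering of `G` (witnessing chordality): `L` is an
injective labelling of the vertices, and for each vertex the neighbors preceding
it in the ordering form a clique. -/
def IsElimOrdering {V : Type} (G : SimpleGraph V) (L : V → ℕ) : Prop :=
  Function.Injective L ∧
    ∀ u x y, G.Adj u x → G.Adj u y → L x < L u → L y < L u → x ≠ y → G.Adj x y

private lemma walk_shortcut {V : Type} {G : SimpleGraph V} :
    ∀ (i : ℕ) {v u : V} (p : G.Walk v u), i + 1 < p.length →
      G.Adj (p.getVert i) (p.getVert (i + 2)) → ∃ q : G.Walk v u, q.length < p.length := by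
  intro i
  induction i with
  | zero =>
    intro v u p hlen hadj
    cases p with
    | nil => simp at hlen
    | cons h r =>
      cases r with
      | nil => simp [SimpleGraph.Walk.length_cons] at hlen
      | @cons _ b _ h' s =>
        simp only [SimpleGraph.Walk.getVert_zero, SimpleGraph.Walk.getVert_cons_succ] at hadj
        refine ⟨SimpleGraph.Walk.cons hadj s, ?_⟩
        simp [SimpleGraph.Walk.length_cons]
  | succ i ih =>
    intro v u p hlen hadj
    cases p with
    | nil => simp at hlen
    | cons h r =>
      simp only [SimpleGraph.Walk.getVert_cons_succ] at hadj
      simp only [SimpleGraph.Walk.length_cons] at hlen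
      obtain ⟨q, hq⟩ := ih r (by omega) hadj
      exact ⟨SimpleGraph.Walk.cons h q, by simp [SimpleGraph.Walk.length_cons]; omega⟩

private lemma path_getVert_ne {V : Type} {G : SimpleGraph V} :
    ∀ {v u : V} (p : G.Walk v u), p.IsPath → ∀ i j, i < j → j ≤ p.length →
      p.getVert i ≠ p.getVert j := by
  intro v u p
  induction p with
  | nil =>
    intro _ i j hij hj
    simp only [SimpleGraph.Walk.length_nil] at hj
    omega
  | @cons a b c h r ih =>
    intro hp i j hij hj
    have hr : r.IsPath := hp.of_cons
    have hns : a ∉ r.support := (SimpleGraph.Walk.cons_isPath_iff h r).mp hp |>.2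
    simp only [SimpleGraph.Walk.length_cons] at hj
    cases i with
    | zero =>
      obtain ⟨j', rfl⟩ : ∃ j', j = j' + 1 := ⟨j - 1, by omega⟩
      simp only [SimpleGraph.Walk.getVert_zero, SimpleGraph.Walk.getVert_cons_succ]
      intro heq
      exact hns (SimpleGraph.Walk.mem_support_iff_exists_getVert.mpr
        ⟨j', heq.symm, by omega⟩)
    | succ i' =>
      obtain ⟨j', rfl⟩ : ∃ j', j = j' + 1 := ⟨j - 1, by omega⟩
      simp only [SimpleGraph.Walk.getVert_cons_succ]
      exact ih hr i' j' (by omega) (by omega)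

/-- Let `G` be a connected chordal graph with elimination ordering `L`, whose
first vertex is `v`.  Then for every vertex `u ≠ v` and every shortest path from
`v` to `u`, the vertex immediately preceding `u` on the path precedes `u` in `L`. -/
theorem chordal_shortest_path_predecessor {V : Type} [Fintype V]
    (G : SimpleGraph V) (hconn : G.Connected) (L : V → ℕ)
    (hL : IsElimOrdering G L) (v : V) (hv : ∀ u, u ≠ v → L v < L u)
    (u : V) (hu : u ≠ v) (p : G.Walk v u) (hp : p.IsPath)
    (hshort : p.length = G.dist v u) :
    L (p.getVert (p.length - 1)) < L u := by
  obtain ⟨hinj, helim⟩ := hL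
  set k := p.length with hk
  have hk1 : 1 ≤ k := by
    rcases Nat.eq_zero_or_pos k with h0 | h
    · have hvu : v = u := SimpleGraph.Walk.eq_of_length_eq_zero (p := p) (by omega)
      exact absurd hvu.symm hu
    · exact h
  rcases Nat.lt_or_ge k 2 with hk2 | hk2
  · -- k = 1, predecessor is v
    have : k = 1 := by omega
    rw [this]
    simp only [Nat.sub_self, SimpleGraph.Walk.getVert_zero]
    exact hv u hu
  · by_contra hle
    push_neg at hle
    -- L u ≤ L (getVert (k-1)); strict since distinct
    have hne : p.getVert (k - 1) ≠ p.getVert k :=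
      path_getVert_ne p hp (k - 1) k (by omega) le_rfl
    have hgk : p.getVert k = u := by rw [hk]; exact p.getVert_length
    rw [hgk] at hne
    have hwu : L u < L (p.getVert (k - 1)) :=
      lt_of_le_of_ne hle (fun h => hne (hinj h).symm)
    -- take index of maximal label
    obtain ⟨i, hi_mem, hi_max⟩ := Finset.exists_max_image (Finset.range (k + 1))
      (fun j => L (p.getVert j)) ⟨0, by simp⟩
    rw [Finset.mem_range] at hi_mem
    have hi_max' : ∀ j, j ≤ k → L (p.getVert j) ≤ L (p.getVert i) := fun j hj =>
      hi_max j (Finset.mem_range.mpr (by omega))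
    have hi0 : i ≠ 0 := by
      intro h0
      have h1 : p.getVert 1 ≠ v := by
        have := path_getVert_ne p hp 0 1 (by omega) (by omega)
        simpa [SimpleGraph.Walk.getVert_zero] using this.symm
      have := hi_max' 1 (by omega)
      rw [h0] at this
      simp only [SimpleGraph.Walk.getVert_zero] at this
      exact absurd this (not_le.mpr (hv _ h1))
    have hik : i ≠ k := by
      intro hik
      have := hi_max' (k - 1) (by omega)
      rw [hik, hgk] at this
      omega
    have hilt : i < k := by omega
    have hi1 : 1 ≤ i := by omega
    -- neighbors of getVert i on the path
    have hadj1 : G.Adj (p.getVert i) (p.getVert (i - 1)) := by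
      have := p.adj_getVert_succ (i := i - 1) (by omega)
      rw [show i - 1 + 1 = i by omega] at this
      exact this.symm
    have hadj2 : G.Adj (p.getVert i) (p.getVert (i + 1)) :=
      p.adj_getVert_succ hilt
    have hlt1 : L (p.getVert (i - 1)) < L (p.getVert i) :=
      lt_of_le_of_ne (hi_max' _ (by omega))
        (fun h => (path_getVert_ne p hp (i - 1) i (by omega) (by omega)) (hinj h))
    have hlt2 : L (p.getVert (i + 1)) < L (p.getVert i) :=
      lt_of_le_of_ne (hi_max' _ (by omega))
        (fun h => (path_getVert_ne p hp i (i + 1) (by omega) (by omega)) (hinj h.symm))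
    have hne12 : p.getVert (i - 1) ≠ p.getVert (i + 1) :=
      path_getVert_ne p hp (i - 1) (i + 1) (by omega) (by omega)
    have hchord := helim _ _ _ hadj1 hadj2 hlt1 hlt2 hne12
    have hsub : (i - 1) + 2 = i + 1 := by omega
    obtain ⟨q, hq⟩ := walk_shortcut (i - 1) p (by omega) (by rw [hsub]; exact hchord)
    have := G.dist_le q
    omega
end

section
/- Let G be a connected chordal graph, let v be the first vertex in an elimination ordering of G, let i ≥ 0 be an integer, and let H be a connected subgraph of G all of whose vertices are at distance greater than i from v. Then the set K of vertices of G at distance exactly i from v having a neighbor in V(H) induces a clique in G. -/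
namespace SimpleGraph

variable {V : Type} {G : SimpleGraph V}

theorem Walk.exists_length_lt_support_subset_of_isClique {x y m : V} (p : G.Walk x y)
    (hm : m ∈ p.support) (hmx : m ≠ x) (hmy : m ≠ y)
    (hclique : G.IsClique {a | G.Adj m a ∧ a ∈ p.support}) :
    ∃ q : G.Walk x y, q.length < p.length ∧ q.support ⊆ p.support := by
  obtain ⟨r, s, rfl⟩ := Walk.mem_support_iff_exists_append.mp hm
  obtain ⟨b, hmb, s, rfl⟩ := Walk.exists_eq_cons_of_ne hmy s
  obtain ⟨a, hma, r, hr⟩ := Walk.exists_eq_cons_of_ne hmx r.reverse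
  obtain rfl : _ = (cons hma r).reverse := by rw [← hr, Walk.reverse_reverse]
  by_cases hab : a = b
  · subst hab
    exact ⟨r.reverse.append s, by simp; omega, fun w => by simp; tauto⟩
  · have hab' : G.Adj a b := hclique ⟨hma, by simp⟩ ⟨hmb, by simp⟩ hab
    exact ⟨r.reverse.append (cons hab' s), by simp, fun w => by simp; tauto⟩

theorem Walk.dist_lt_of_mem_support_of_length_eq_dist {v x w : V} (p : G.Walk v x)
    (hp : p.length = G.dist v x) (hw : w ∈ p.support) (hwx : w ≠ x) :
    G.dist v w < G.dist v x := by
  obtain ⟨r, s, rfl⟩ := Walk.mem_support_iff_exists_append.mp hw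
  have hs : s.length ≠ 0 := fun h => hwx (Walk.eq_of_length_eq_zero h)
  calc G.dist v w ≤ r.length := dist_le r
    _ < (r.append s).length := by rw [Walk.length_append]; omega
    _ = G.dist v x := hp

theorem exists_walk_support_subset_of_connected_induce {S : Set V} (hS : (G.induce S).Connected)
    {y₁ y₂ : V} (hy₁ : y₁ ∈ S) (hy₂ : y₂ ∈ S) : ∃ p : G.Walk y₁ y₂, ∀ w ∈ p.support, w ∈ S := by
  obtain ⟨p⟩ := hS ⟨y₁, hy₁⟩ ⟨y₂, hy₂⟩
  refine ⟨p.map (Embedding.induce S).toHom, fun w hw => ?_⟩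
  replace hw : w ∈ (p.map (Embedding.induce S).toHom).support := hw
  rw [Walk.support_map] at hw
  obtain ⟨w', -, rfl⟩ := List.mem_map.mp hw
  exact w'.2

theorem Connected.exists_walk_through_dist_lt (hconn : G.Connected) {v x₁ x₂ : V} {i : ℕ}
    (hx₁ : G.dist v x₁ = i) (hx₂ : G.dist v x₂ = i) :
    ∃ p : G.Walk x₁ x₂, ∀ w ∈ p.support, w = x₁ ∨ w = x₂ ∨ G.dist v w < i := by
  obtain ⟨p₁, hp₁⟩ := hconn.exists_walk_length_eq_dist v x₁
  obtain ⟨p₂, hp₂⟩ := hconn.exists_walk_length_eq_dist v x₂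
  refine ⟨p₁.reverse.append p₂, fun w hw => ?_⟩
  rw [Walk.mem_support_append_iff, Walk.support_reverse, List.mem_reverse] at hw
  by_cases hw₁ : w = x₁
  · exact Or.inl hw₁
  by_cases hw₂ : w = x₂
  · exact Or.inr (Or.inl hw₂)
  refine Or.inr (Or.inr ?_)
  rcases hw with hw | hw
  · exact hx₁ ▸ p₁.dist_lt_of_mem_support_of_length_eq_dist hp₁ hw hw₁
  · exact hx₂ ▸ p₂.dist_lt_of_mem_support_of_length_eq_dist hp₂ hw hw₂

theorem exists_walk_through_of_adj_of_connected_induce {S : Set V} (hS : (G.induce S).Connected)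
    {x₁ x₂ y₁ y₂ : V} (hy₁ : y₁ ∈ S) (hy₂ : y₂ ∈ S) (hxy₁ : G.Adj x₁ y₁) (hxy₂ : G.Adj x₂ y₂) :
    ∃ p : G.Walk x₁ x₂, ∀ w ∈ p.support, w = x₁ ∨ w = x₂ ∨ w ∈ S := by
  obtain ⟨q, hq⟩ := exists_walk_support_subset_of_connected_induce hS hy₁ hy₂
  refine ⟨Walk.cons hxy₁ (q.append (Walk.cons hxy₂.symm Walk.nil)), fun w hw => ?_⟩
  simp only [Walk.support_cons, Walk.mem_support_append_iff, Walk.support_nil,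
    List.mem_cons, List.not_mem_nil, or_false] at hw
  rcases hw with rfl | hw | rfl | rfl
  exacts [Or.inl rfl, Or.inr (Or.inr (hq w hw)), Or.inr (Or.inr hy₂), Or.inr (Or.inl rfl)]

end SimpleGraph

namespace IsElimOrdering

open SimpleGraph

variable {V : Type} {G : SimpleGraph V} {L : V → ℕ}

theorem exists_walk_support_subset_lt_max (hL : IsElimOrdering G L) {x y : V} (p : G.Walk x y) :
    ∃ q : G.Walk x y, q.support ⊆ p.support ∧
      ∀ w ∈ q.support, w = x ∨ w = y ∨ L w < max (L x) (L y) := by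
  classical
  obtain ⟨m, hm, hmax⟩ := p.support.toFinset.exists_max_image L ⟨x, by simp⟩
  simp only [List.mem_toFinset] at hm hmax
  have hlt : ∀ w ∈ p.support, w ≠ m → L w < L m := fun w hw hwm =>
    (hmax w hw).lt_of_ne (hL.1.ne hwm)
  by_cases hmxy : m = x ∨ m = y
  · refine ⟨p, List.Subset.refl _, fun w hw => ?_⟩
    by_contra! h
    rcases hmxy with rfl | rfl
    · have := hlt w hw h.1; omega
    · have := hlt w hw h.2.1; omega
  obtain ⟨hmx, hmy⟩ := not_or.mp hmxy
  have hclique : G.IsClique {a | G.Adj m a ∧ a ∈ p.support} := fun a ha b hb hab =>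
    hL.2 m a b ha.1 hb.1 (hlt a ha.2 (G.ne_of_adj ha.1).symm)
      (hlt b hb.2 (G.ne_of_adj hb.1).symm) hab
  obtain ⟨q, hqp, hsub⟩ := p.exists_length_lt_support_subset_of_isClique hm hmx hmy hclique
  obtain ⟨q', hsub', hq'⟩ := hL.exists_walk_support_subset_lt_max q
  exact ⟨q', List.Subset.trans hsub' hsub, hq'⟩
termination_by p.length

theorem adj_or_exists_adj_lt (hL : IsElimOrdering G L) {A : Set V} {x y : V} (hyx : L y < L x)
    (p : G.Walk x y) (hp : ∀ w ∈ p.support, w = x ∨ w = y ∨ w ∈ A) :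
    G.Adj x y ∨ ∃ a ∈ A, G.Adj x a ∧ L a < L x := by
  obtain ⟨q, hqp, hq⟩ := hL.exists_walk_support_subset_lt_max p
  obtain ⟨a, hxa, r, rfl⟩ := Walk.exists_eq_cons_of_ne (fun h => hyx.ne (congrArg L h).symm) q
  have ha : a ∈ (Walk.cons hxa r).support := by simp
  have hax : a ≠ x := (G.ne_of_adj hxa).symm
  by_cases hay : a = y
  · exact Or.inl (hay ▸ hxa)
  have haA := ((hp a (hqp ha)).resolve_left hax).resolve_left hay
  have hlt := ((hq a ha).resolve_left hax).resolve_left hay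
  exact Or.inr ⟨a, haA, hxa, by simpa [hyx.le] using hlt⟩

theorem adj_of_walks_through_separated (hL : IsElimOrdering G L) {A B : Set V}
    (hAB : Disjoint A B) (hnadj : ∀ a ∈ A, ∀ b ∈ B, ¬G.Adj a b) {x y : V} (hxy : x ≠ y)
    (p q : G.Walk x y) (hp : ∀ w ∈ p.support, w = x ∨ w = y ∨ w ∈ A)
    (hq : ∀ w ∈ q.support, w = x ∨ w = y ∨ w ∈ B) : G.Adj x y := by
  wlog hyx : L y < L x generalizing x y
  · refine (this hxy.symm p.reverse q.reverse ?_ ?_ ((not_lt.mp hyx).lt_of_ne (hL.1.ne hxy))).symm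
    · intro w hw
      have := hp w (by simpa [Walk.support_reverse] using hw)
      tauto
    · intro w hw
      have := hq w (by simpa [Walk.support_reverse] using hw)
      tauto
  rcases hL.adj_or_exists_adj_lt hyx p hp with hxy' | ⟨a, haA, hxa, hax⟩
  · exact hxy'
  rcases hL.adj_or_exists_adj_lt hyx q hq with hxy' | ⟨b, hbB, hxb, hbx⟩
  · exact hxy'
  exact absurd (hL.2 x a b hxa hxb hax hbx (hAB.ne_of_mem haA hbB)) (hnadj a haA b hbB)

end IsElimOrdering

theorem chordal_layer_neighborhood_clique_general {V : Type}
    (G : SimpleGraph V) (hconn : G.Connected) (L : V → ℕ)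
    (hL : IsElimOrdering G L) (v : V)
    (i : ℕ) (S : Set V) (hSconn : (G.induce S).Connected)
    (hfar : ∀ y ∈ S, i < G.dist v y) :
    ∀ x₁ ∈ {x : V | G.dist v x = i ∧ ∃ y ∈ S, G.Adj x y},
      ∀ x₂ ∈ {x : V | G.dist v x = i ∧ ∃ y ∈ S, G.Adj x y},
        x₁ ≠ x₂ → G.Adj x₁ x₂ := by
  rintro x₁ ⟨hx₁, y₁, hy₁, hxy₁⟩ x₂ ⟨hx₂, y₂, hy₂, hxy₂⟩ hne
  obtain ⟨p, hp⟩ :=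
    SimpleGraph.exists_walk_through_of_adj_of_connected_induce hSconn hy₁ hy₂ hxy₁ hxy₂
  obtain ⟨q, hq⟩ := hconn.exists_walk_through_dist_lt hx₁ hx₂
  have hdisj : Disjoint S {u | G.dist v u < i} :=
    Set.disjoint_left.mpr fun u hu (hu' : G.dist v u < i) => (hfar u hu).not_gt hu'
  have hnadj : ∀ a ∈ S, ∀ b ∈ {u | G.dist v u < i}, ¬G.Adj a b := by
    intro a ha b (hb : G.dist v b < i) hab
    have := hfar a ha
    rcases hab.diff_dist_adj (u := v) with h | h | h <;> omega
  exact hL.adj_of_walks_through_separated hdisj hnadj hne p q hp hq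

/-- Let `G` be a connected chordal graph, `v` the first vertex of an elimination
ordering of `G`, `i ≥ 0`, and `H` a connected subgraph of `G` (given by its
nonempty vertex set `S`) at distance greater than `i` from `v`.  Then the set of
vertices at distance exactly `i` from `v` with a neighbor in `S` induces a
clique in `G`. -/
theorem chordal_layer_neighborhood_clique {V : Type} [Fintype V]
    (G : SimpleGraph V) (hconn : G.Connected) (L : V → ℕ)
    (hL : IsElimOrdering G L) (v : V) (hv : ∀ u, u ≠ v → L v < L u)
    (i : ℕ) (S : Set V) (hS : S.Nonempty) (hSconn : (G.induce S).Connected)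
    (hfar : ∀ y ∈ S, i < G.dist v y) :
    ∀ x₁ ∈ {x : V | G.dist v x = i ∧ ∃ y ∈ S, G.Adj x y},
      ∀ x₂ ∈ {x : V | G.dist v x = i ∧ ∃ y ∈ S, G.Adj x y},
        x₁ ≠ x₂ → G.Adj x₁ x₂ :=
  chordal_layer_neighborhood_clique_general G hconn L hL v i S hSconn hfar
end

section
/- In any chordal graph with an elimination ordering, for every induced path P with at least two vertices, the vertex of P that comes last in the elimination ordering is an end-vertex of P. -/
private lemma getVert_injOn_aux {V : Type} {G : SimpleGraph V} :
    ∀ {u w : V} (p : G.Walk u w), p.IsPath →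
      ∀ i ≤ p.length, ∀ j ≤ p.length, p.getVert i = p.getVert j → i = j := by
  intro u w p
  induction p with
  | nil => intro _ i hi j hj _; simp at hi hj; omega
  | @cons a b c h q ih =>
    intro hp i hi j hj hij
    rw [SimpleGraph.Walk.cons_isPath_iff] at hp
    simp only [SimpleGraph.Walk.length_cons] at hi hj
    match i, j with
    | 0, 0 => rfl
    | 0, j + 1 =>
      exfalso
      apply hp.2
      rw [SimpleGraph.Walk.getVert_zero, SimpleGraph.Walk.getVert_cons_succ] at hij
      exact SimpleGraph.Walk.mem_support_iff_exists_getVert.mpr ⟨j, hij.symm, by omega⟩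
    | i + 1, 0 =>
      exfalso
      apply hp.2
      rw [SimpleGraph.Walk.getVert_zero, SimpleGraph.Walk.getVert_cons_succ] at hij
      exact SimpleGraph.Walk.mem_support_iff_exists_getVert.mpr ⟨i, hij, by omega⟩
    | i + 1, j + 1 =>
      rw [SimpleGraph.Walk.getVert_cons_succ, SimpleGraph.Walk.getVert_cons_succ] at hij
      have := ih hp.1 i (by omega) j (by omega) hij
      omega

/-- In a chordal graph with elimination ordering `L`, the vertex of any induced
path with at least two vertices that comes last in `L` is an end of the path. -/
theorem chordal_induced_path_last_is_end {V : Type} [Fintype V]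
    (G : SimpleGraph V) (L : V → ℕ) (hL : IsElimOrdering G L)
    (u w : V) (p : G.Walk u w) (hp : p.IsPath) (hlen : 0 < p.length)
    (hinduced : ∀ x y, x ∈ p.support → y ∈ p.support → G.Adj x y →
      p.toSubgraph.Adj x y)
    (z : V) (hz : z ∈ p.support) (hmax : ∀ x ∈ p.support, L x ≤ L z) :
    z = u ∨ z = w := by
  by_contra hcon
  push_neg at hcon
  obtain ⟨hzu, hzw⟩ := hcon
  obtain ⟨i, hiz, hile⟩ := SimpleGraph.Walk.mem_support_iff_exists_getVert.mp hz
  have hinj := getVert_injOn_aux p hp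
  have hi0 : i ≠ 0 := by
    intro h; subst h; simp at hiz; exact hzu hiz.symm
  have hilen : i ≠ p.length := by
    intro h; subst h; rw [SimpleGraph.Walk.getVert_length] at hiz; exact hzw hiz.symm
  set x := p.getVert (i - 1) with hx
  set y := p.getVert (i + 1) with hy
  have hmemx : x ∈ p.support :=
    SimpleGraph.Walk.mem_support_iff_exists_getVert.mpr ⟨i - 1, rfl, by omega⟩
  have hmemy : y ∈ p.support :=
    SimpleGraph.Walk.mem_support_iff_exists_getVert.mpr ⟨i + 1, rfl, by omega⟩
  have haxz : G.Adj x z := by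
    have := p.adj_getVert_succ (i := i - 1) (by omega)
    rwa [show i - 1 + 1 = i by omega, hiz] at this
  have hazy : G.Adj z y := by
    have := p.adj_getVert_succ (i := i) (by omega)
    rwa [hiz] at this
  have hxy : x ≠ y := by
    intro h
    have := hinj (i - 1) (by omega) (i + 1) (by omega) h
    omega
  have hLx : L x < L z :=
    lt_of_le_of_ne (hmax x hmemx) (fun h => haxz.ne (hL.1 h))
  have hLy : L y < L z :=
    lt_of_le_of_ne (hmax y hmemy) (fun h => hazy.ne' (hL.1 h))
  have hadjxy : G.Adj x y := hL.2 z x y haxz.symm hazy hLx hLy hxy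
  obtain ⟨j, hje, hjlt⟩ := (p.toSubgraph_adj_iff).mp (hinduced x y hmemx hmemy hadjxy)
  rw [Sym2.eq_iff] at hje
  rcases hje with ⟨h1, h2⟩ | ⟨h1, h2⟩
  · have : j = i - 1 := hinj j (by omega) (i - 1) (by omega) (h1.trans hx)
    subst this
    rw [show i - 1 + 1 = i by omega, hiz] at h2
    exact hazy.ne h2
  · have : j = i + 1 := hinj j (by omega) (i + 1) (by omega) (h1.trans hy)
    subst this
    have : i + 1 + 1 = i - 1 := hinj (i + 1 + 1) (by omega) (i - 1) (by omega) (h2.trans hx)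
    omega
end

section
/- Let T be the complete rooted (Δ−1)-ary tree of depth d with Δ ≥ 3, weighted by w(v) = (Δ−1)^{−depth(v)}. For every a' ≥ 3 and every X ⊆ V(T) containing the root, if some vertex v ∈ X satisfies w(C_v) ≥ a'·w(v), where C_v is the set of descendants of v (including v) reachable from v without passing through another vertex of X, then |C_v| ≥ (Δ−1)^{a'−2} + 1. -/
/-- Vertices of the complete `k`-ary tree of depth `d`: a vertex at depth `i`
is a sequence of `i` child-choices. -/
def AryVert (k d : ℕ) : Type := (i : Fin (d + 1)) × (Fin i.val → Fin k)

/-- `u` is an ancestor of (or equal to) `v` in the complete `k`-ary tree: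
the sequence of `u` is a prefix of the sequence of `v`. -/
def AryDesc {k d : ℕ} (u v : AryVert k d) : Prop :=
  ∃ h : u.1.val ≤ v.1.val, ∀ j : Fin u.1.val, v.2 (Fin.castLE h j) = u.2 j

/-- The root of the complete `k`-ary tree of depth `d`. -/
def aryRoot (k d : ℕ) : AryVert k d := ⟨⟨0, Nat.succ_pos d⟩, Fin.elim0⟩

/-- The weight of a vertex at depth `i` is `k ^ (-i)`. -/
noncomputable def aryWt {k d : ℕ} (u : AryVert k d) : ℝ := ((k : ℝ))⁻¹ ^ u.1.val

/-- For `v ∈ X`, the set of descendants of `v` (including `v`) reachable from `v`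
without passing through another vertex of `X`. -/
def aryCluster {k d : ℕ} (X : Set (AryVert k d)) (v : AryVert k d) :
    Set (AryVert k d) :=
  {u | AryDesc v u ∧ ∀ w, AryDesc v w → AryDesc w u → w ≠ v → w ≠ u → w ∉ X}

instance aryVertFinite (k d : ℕ) : Finite (AryVert k d) := by
  unfold AryVert; infer_instance

lemma aryVert_ext {k d : ℕ} {u₁ u₂ : AryVert k d} (h : u₁.1.val = u₂.1.val)
    (h2 : ∀ (j : ℕ) (hj₁ : j < u₁.1.val) (hj₂ : j < u₂.1.val),
      u₁.2 ⟨j, hj₁⟩ = u₂.2 ⟨j, hj₂⟩) : u₁ = u₂ := by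
  obtain ⟨a, f⟩ := u₁
  obtain ⟨b, g⟩ := u₂
  obtain rfl : a = b := Fin.ext h
  have hfg : f = g := by
    funext j
    have := h2 j.val j.isLt j.isLt
    simpa using this
  rw [hfg]

/-- There are at most `k ^ t` descendants of `v` at depth `depth v + t`. -/
lemma ary_card_level {k d : ℕ} (hk : 0 < k) (v : AryVert k d) (t : ℕ)
    (F : Finset (AryVert k d))
    (hF : ∀ u ∈ F, AryDesc v u ∧ u.1.val = v.1.val + t) :
    F.card ≤ k ^ t := by
  classical
  have hcard : (Finset.univ : Finset (Fin t → Fin k)).card = k ^ t := by simp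
  rw [← hcard]
  apply Finset.card_le_card_of_injOn
    (fun u (j : Fin t) =>
      if h : v.1.val + j.val < u.1.val then u.2 ⟨v.1.val + j.val, h⟩ else ⟨0, hk⟩)
  · exact fun _ _ => Finset.mem_univ _
  · intro u₁ hu₁ u₂ hu₂ hφ
    simp only [Finset.mem_coe] at hu₁ hu₂
    obtain ⟨⟨hle₁, hc₁⟩, hd₁⟩ := hF u₁ hu₁
    obtain ⟨⟨hle₂, hc₂⟩, hd₂⟩ := hF u₂ hu₂
    apply aryVert_ext (by omega)
    intro j hj₁ hj₂
    by_cases hji : j < v.1.val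
    · have e₁ : u₁.2 ⟨j, hj₁⟩ = v.2 ⟨j, hji⟩ := hc₁ ⟨j, hji⟩
      have e₂ : u₂.2 ⟨j, hj₂⟩ = v.2 ⟨j, hji⟩ := hc₂ ⟨j, hji⟩
      rw [e₁, e₂]
    · push_neg at hji
      have hjt : j - v.1.val < t := by omega
      have hcong := congrFun hφ ⟨j - v.1.val, hjt⟩
      have hlt₁ : v.1.val + (j - v.1.val) < u₁.1.val := by omega
      have hlt₂ : v.1.val + (j - v.1.val) < u₂.1.val := by omega
      simp only [dif_pos hlt₁, dif_pos hlt₂] at hcong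
      have e₁ : (⟨v.1.val + (j - v.1.val), hlt₁⟩ : Fin u₁.1.val) = ⟨j, hj₁⟩ :=
        Fin.ext (by show v.1.val + (j - v.1.val) = j; omega)
      have e₂ : (⟨v.1.val + (j - v.1.val), hlt₂⟩ : Fin u₂.1.val) = ⟨j, hj₂⟩ :=
        Fin.ext (by show v.1.val + (j - v.1.val) = j; omega)
      rw [e₁, e₂] at hcong
      exact hcong

set_option maxHeartbeats 1000000 in
/-- In the complete `(Δ-1)`-ary tree of depth `d` weighted by `w(u) = (Δ-1)^(-depth u)`,
for `a' ≥ 3` and `X` a set of vertices containing the root: if `v ∈ X` satisfies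
`w(C_v) ≥ a' · w(v)`, then `|C_v| ≥ (Δ-1)^(a'-2) + 1`. -/
theorem ary_tree_cluster_size (Δ d : ℕ) (hΔ : 3 ≤ Δ) (a' : ℝ) (ha' : 3 ≤ a')
    (X : Set (AryVert (Δ - 1) d)) (hroot : aryRoot (Δ - 1) d ∈ X)
    (v : AryVert (Δ - 1) d) (hv : v ∈ X)
    (hw : a' * aryWt v ≤ ∑ᶠ u ∈ aryCluster X v, aryWt u) :
    ((Δ : ℝ) - 1) ^ (a' - 2) + 1 ≤ ((aryCluster X v).ncard : ℝ) := by
  classical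
  have hk2 : 2 ≤ Δ - 1 := by omega
  set K : ℝ := ((Δ - 1 : ℕ) : ℝ) with hKdef
  have hK2 : (2:ℝ) ≤ K := by rw [hKdef]; exact_mod_cast hk2
  have hK0 : (0:ℝ) < K := by linarith
  have hK1 : (1:ℝ) ≤ K := by linarith
  have hKeq : (Δ : ℝ) - 1 = K := by
    rw [hKdef, Nat.cast_sub (by omega : 1 ≤ Δ), Nat.cast_one]
  set q : ℝ := K⁻¹ with hqdef
  have hq0 : 0 < q := inv_pos.mpr hK0
  have hq1 : q ≤ 1 := by
    rw [hqdef]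
    exact inv_le_one_of_one_le₀ hK1
  have hkq : K * q = 1 := mul_inv_cancel₀ (ne_of_gt hK0)
  have hCfin : (aryCluster X v).Finite := Set.toFinite _
  set Cf := hCfin.toFinset with hCf
  have hdesc : ∀ u ∈ Cf, AryDesc v u := by
    intro u hu
    exact (hCfin.mem_toFinset.mp hu).1
  set i := v.1.val with hi
  have hwtu : ∀ u : AryVert (Δ - 1) d, aryWt u = q ^ u.1.val := by
    intro u
    rw [hqdef, hKdef]
    rfl
  have hwtv : aryWt v = q ^ i := hwtu v
  have hWeq : ∑ᶠ u ∈ aryCluster X v, aryWt u = ∑ u ∈ Cf, aryWt u :=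
    finsum_mem_eq_finite_toFinset_sum _ hCfin
  -- choose the threshold level
  set c := ⌈a'⌉₊ with hcdef
  have hac : a' ≤ (c:ℝ) := Nat.le_ceil a'
  have hc3 : 3 ≤ c := by
    have h3 : (3:ℝ) ≤ (c:ℝ) := le_trans ha' hac
    exact_mod_cast h3
  have hc_lt : (c:ℝ) < a' + 1 := Nat.ceil_lt_add_one (by linarith)
  set s := c - 2 with hsdef
  have hsc : (s:ℝ) = (c:ℝ) - 2 := by
    have h2 : s + 2 = c := by omega
    have := congrArg (Nat.cast : ℕ → ℝ) h2
    push_cast at this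
    linarith
  have hs_le : (s:ℝ) + 1 ≤ a' := by linarith
  have ha2s : a' - 2 ≤ (s:ℝ) := by linarith
  -- split the cluster by depth
  set Low := Cf.filter (fun u => u.1.val ≤ i + s) with hLowdef
  set High := Cf.filter (fun u => ¬ u.1.val ≤ i + s) with hHighdef
  have hcardsplit : Low.card + High.card = Cf.card :=
    Finset.card_filter_add_card_filter_not _
  have hsumsplit : ∑ u ∈ Cf, aryWt u = ∑ u ∈ Low, aryWt u + ∑ u ∈ High, aryWt u :=
    (Finset.sum_filter_add_sum_filter_not _ _ _).symm
  have hmaps : ∀ u ∈ Low, u.1.val - i ∈ Finset.range (s+1) := by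
    intro u hu
    rw [hLowdef, Finset.mem_filter] at hu
    obtain ⟨hle, _⟩ := hdesc u hu.1
    simp only [Finset.mem_range]
    omega
  set n : ℕ → ℕ := fun t => (Low.filter (fun u => u.1.val - i = t)).card with hndef
  have hlowsum : ∑ u ∈ Low, aryWt u =
      ∑ t ∈ Finset.range (s+1), ∑ u ∈ Low.filter (fun u => u.1.val - i = t), aryWt u :=
    (Finset.sum_fiberwise_of_maps_to hmaps _).symm
  have hlowcard : Low.card = ∑ t ∈ Finset.range (s+1), n t :=
    Finset.card_eq_sum_card_fiberwise hmaps
  have hfib_sum : ∀ t ∈ Finset.range (s+1),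
      ∑ u ∈ Low.filter (fun u => u.1.val - i = t), aryWt u = (n t : ℝ) * q ^ (i+t) := by
    intro t _
    have hconst : ∀ u ∈ Low.filter (fun u => u.1.val - i = t), aryWt u = q ^ (i+t) := by
      intro u hu
      rw [Finset.mem_filter, hLowdef, Finset.mem_filter] at hu
      obtain ⟨⟨huC, _⟩, hut⟩ := hu
      obtain ⟨hle, _⟩ := hdesc u huC
      have hud : u.1.val = i + t := by omega
      rw [hwtu u, hud]
    rw [Finset.sum_congr rfl hconst, Finset.sum_const, nsmul_eq_mul]
  have hfib_card : ∀ t, (n t : ℝ) ≤ K ^ t := by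
    intro t
    have hnat : n t ≤ (Δ - 1) ^ t := by
      apply ary_card_level (by omega) v t
      intro u hu
      rw [Finset.mem_filter, hLowdef, Finset.mem_filter] at hu
      obtain ⟨⟨huC, _⟩, hut⟩ := hu
      refine ⟨hdesc u huC, ?_⟩
      obtain ⟨hle, _⟩ := hdesc u huC
      omega
    calc (n t : ℝ) ≤ (((Δ - 1)^t : ℕ) : ℝ) := by exact_mod_cast hnat
      _ = K ^ t := by rw [hKdef]; push_cast; ring
  have hhigh : ∑ u ∈ High, aryWt u ≤ (High.card : ℝ) * q ^ (i+s+1) := by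
    have hb := Finset.sum_le_card_nsmul High aryWt (q ^ (i+s+1)) ?_
    · rwa [nsmul_eq_mul] at hb
    · intro u hu
      rw [hHighdef, Finset.mem_filter] at hu
      rw [hwtu u]
      exact pow_le_pow_of_le_one hq0.le hq1 (by omega)
  -- the per-level bound
  have hKtq : ∀ t : ℕ, K^t * q^(i+t) = q^i := by
    intro t
    rw [pow_add]
    calc K^t * (q^i * q^t) = (K*q)^t * q^i := by ring
      _ = q^i := by rw [hkq, one_pow, one_mul]
  have hterm : ∀ t ∈ Finset.range (s+1),
      (n t : ℝ) * q^(i+t) ≤ (n t : ℝ) * q^(i+s+1) + (q^i - K^t * q^(i+s+1)) := by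
    intro t ht
    have htle : i + t ≤ i + s + 1 := by
      simp only [Finset.mem_range] at ht; omega
    have hmono : q^(i+s+1) ≤ q^(i+t) := pow_le_pow_of_le_one hq0.le hq1 htle
    have h1 : (0:ℝ) ≤ q^(i+t) - q^(i+s+1) := by linarith
    have h2 := mul_le_mul_of_nonneg_right (hfib_card t) h1
    have h3 := hKtq t
    nlinarith [h2, h3]
  set G : ℝ := ∑ t ∈ Finset.range (s+1), K^t with hGdef
  set N : ℝ := (Cf.card : ℝ) with hNdef
  have hmain : a' * q^i ≤ ((s:ℝ)+1) * q^i + (N - G) * q^(i+s+1) := by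
    have h0 : a' * q^i ≤ ∑ u ∈ Cf, aryWt u := by
      rw [← hWeq, ← hwtv]; exact hw
    have hlow_le : ∑ u ∈ Low, aryWt u ≤
        (Low.card : ℝ) * q^(i+s+1) + (((s:ℝ)+1) * q^i - G * q^(i+s+1)) := by
      rw [hlowsum]
      calc ∑ t ∈ Finset.range (s+1), ∑ u ∈ Low.filter (fun u => u.1.val - i = t), aryWt u
          = ∑ t ∈ Finset.range (s+1), (n t : ℝ) * q ^ (i+t) :=
            Finset.sum_congr rfl hfib_sum
        _ ≤ ∑ t ∈ Finset.range (s+1),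
              ((n t : ℝ) * q^(i+s+1) + (q^i - K^t * q^(i+s+1))) :=
            Finset.sum_le_sum hterm
        _ = (∑ t ∈ Finset.range (s+1), (n t : ℝ)) * q^(i+s+1)
              + ((((s:ℝ)+1)) * q^i - G * q^(i+s+1)) := by
            rw [Finset.sum_add_distrib, Finset.sum_sub_distrib, ← Finset.sum_mul,
              Finset.sum_const, Finset.card_range, ← Finset.sum_mul, hGdef]
            push_cast
            ring
        _ = (Low.card : ℝ) * q^(i+s+1) + (((s:ℝ)+1) * q^i - G * q^(i+s+1)) := by
            rw [hlowcard]
            push_cast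
            ring
    have hNg : (High.card : ℝ) = N - (Low.card : ℝ) := by
      rw [hNdef]
      have hcs := hcardsplit
      push_cast [← hcs]
      ring
    have hh2 := hhigh
    rw [hNg] at hh2
    have hall : ∑ u ∈ Cf, aryWt u ≤
        ((s:ℝ)+1) * q^i + (N - G) * q^(i+s+1) := by
      rw [hsumsplit]
      nlinarith [hlow_le, hh2]
    linarith
  -- divide out q^i and multiply by K^(s+1)
  have hqi : (0:ℝ) < q^i := pow_pos hq0 i
  have hfinal1 : a' ≤ ((s:ℝ)+1) + (N - G) * q^(s+1) := by
    have hre : ((s:ℝ)+1) * q^i + (N - G) * q^(i+s+1)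
        = (((s:ℝ)+1) + (N - G) * q^(s+1)) * q^i := by
      rw [show i + s + 1 = i + (s+1) by omega, pow_add]
      ring
    rw [hre] at hmain
    exact le_of_mul_le_mul_right hmain hqi
  have hKp : (0:ℝ) < K^(s+1) := pow_pos hK0 _
  have hq_s : q^(s+1) * K^(s+1) = 1 := by
    rw [← mul_pow, hqdef, inv_mul_cancel₀ (ne_of_gt hK0), one_pow]
  have hNbd : G + (a' - ((s:ℝ)+1)) * K^(s+1) ≤ N := by
    have h3 : (a' - ((s:ℝ)+1)) ≤ (N - G) * q^(s+1) := by linarith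
    have h4 := mul_le_mul_of_nonneg_right h3 hKp.le
    rw [mul_assoc, hq_s, mul_one] at h4
    linarith
  -- conclude
  have hncard0 : (aryCluster X v).ncard = Cf.card := by
    rw [hCf]
    exact Set.ncard_eq_toFinset_card _ hCfin
  have hncard : ((aryCluster X v).ncard : ℝ) = N := by
    rw [hNdef, hncard0]
  rw [hKeq, hncard]
  have hrpow_le : K ^ (a' - 2) ≤ K ^ (s:ℕ) := by
    have h := Real.rpow_le_rpow_of_exponent_le hK1 ha2s
    rwa [Real.rpow_natCast] at h
  have hG1 : K^(s:ℕ) + 1 ≤ G := by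
    rw [hGdef, Finset.sum_range_succ]
    have hs0 : 0 < s := by omega
    have h1 : (1:ℝ) ≤ ∑ t ∈ Finset.range s, K^t := by
      have := Finset.single_le_sum (f := fun t => K^t)
        (fun t _ => (pow_pos hK0 t).le) (Finset.mem_range.mpr hs0)
      simpa using this
    linarith
  have hth : 0 ≤ a' - ((s:ℝ)+1) := by linarith
  have hmul : 0 ≤ (a' - ((s:ℝ)+1)) * K^(s+1) := mul_nonneg hth hKp.le
  linarith
end

section
/- Let k, s, p be positive integers with s ≥ 12k. If G has treewidth less than k and W ⊆ V(G) with |W| ≤ p·s, then there exist C ⊆ V(G) and non-empty sets A₁,…,A_t ⊆ V(G) with t < 6p such that (i) |C| < 6pk; (ii) |A_i ∩ (C ∪ W)| ≤ s for each i; (iii) G is the union of the induced subgraphs G[A₁],…,G[A_t]; and (iv) A_i ∩ A_j ⊆ C for all i < j. -/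
/-- A tree decomposition of a graph `G`. -/
structure TreeDecomp {V : Type} (G : SimpleGraph V) where
  /-- index type of the decomposition tree -/
  ι : Type
  /-- the decomposition tree -/
  t : SimpleGraph ι
  tree : t.IsTree
  /-- the bags of the decomposition -/
  bag : ι → Set V
  mem_bag : ∀ v : V, ∃ i, v ∈ bag i
  edge_bag : ∀ ⦃u v : V⦄, G.Adj u v → ∃ i, u ∈ bag i ∧ v ∈ bag i
  bag_connected : ∀ v : V, (t.induce {i | v ∈ bag i}).Connected

/-- `G` has treewidth at most `k`: there is a tree decomposition all of whose
bags have at most `k + 1` vertices. -/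
def TreewidthLE {V : Type} (G : SimpleGraph V) (k : ℕ) : Prop :=
  ∃ D : TreeDecomp G, ∀ i, (D.bag i).ncard ≤ k + 1

/-!
Weight each node of the decomposition tree by the vertices of `W` assigned to its bag. Walking
from a node into a heavy branch, one reaches a node `u` whose branches, apart from the one the walk
came from, are light, and some of them can be grouped into a set `R` of nodes of weight between
`⌈s/3⌉` and `s - k`. The bag of `u` together with the bags of `R` is one piece; replacing the
bags of `R` by the bag of `u` leaves a decomposition of the rest, in which the bag of `u` is added
to the weighted set. Each round puts at most `k` vertices into `C` and lowers the weight by at least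
`⌈s/3⌉ - k ≥ s/4`, so there are at most `4p` rounds.
-/

namespace SimpleGraph

variable {ι : Type*} {t : SimpleGraph ι}

/-- In a tree: the vertices of the path from `a` to `b`. -/
def segment (t : SimpleGraph ι) (a b : ι) : Set ι := {x | ∀ w : t.Walk a b, x ∈ w.support}

lemma left_mem_segment (a b : ι) : a ∈ t.segment a b := fun w => w.start_mem_support

lemma right_mem_segment (a b : ι) : b ∈ t.segment a b := fun w => w.end_mem_support

lemma segment_self (a : ι) : t.segment a a = {a} := by
  refine Set.Subset.antisymm (fun x hx => ?_) (by simpa using left_mem_segment a a)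
  simpa using hx Walk.nil

lemma segment_comm (a b : ι) : t.segment a b = t.segment b a := by
  have key : ∀ a b : ι, t.segment a b ⊆ t.segment b a := fun a b x hx w => by
    simpa using hx w.reverse
  exact (key a b).antisymm (key b a)

lemma segment_subset_union (a b c : ι) : t.segment a c ⊆ t.segment a b ∪ t.segment b c := by
  intro x hx
  by_contra h
  simp only [Set.mem_union, segment, Set.mem_ofPred_eq, not_or, not_forall] at h
  obtain ⟨⟨w₁, h₁⟩, w₂, h₂⟩ := h
  rcases List.mem_append.1 (Walk.support_append w₁ w₂ ▸ hx (w₁.append w₂)) with h | h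
  · exact h₁ h
  · exact h₂ (List.mem_of_mem_tail h)

lemma segment_subset_segment_of_mem {a b x : ι} (h : x ∈ t.segment a b) :
    t.segment a x ⊆ t.segment a b := by
  classical
  intro y hy w
  exact w.support_takeUntil_subset_support (h w) (hy _)

/-- The component of `t - u` containing `x` (empty when `x = u`). -/
def branch (t : SimpleGraph ι) (u x : ι) : Set ι := {j | u ∉ t.segment x j}

/-- `R` is a union of components of `t - u`. -/
def IsBranchUnion (t : SimpleGraph ι) (u : ι) (R : Set ι) : Prop :=
  u ∉ R ∧ ∀ ⦃a c⦄, a ∈ R → u ∉ t.segment a c → c ∈ R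

lemma branch_self (u : ι) : t.branch u u = ∅ :=
  Set.eq_empty_of_forall_notMem fun _ h => h (left_mem_segment _ _)

lemma notMem_branch (u x : ι) : u ∉ t.branch u x := fun h => h (right_mem_segment _ _)

lemma mem_branch_self {u x : ι} (hx : x ≠ u) : x ∈ t.branch u x := by
  simpa [branch, segment_self] using hx.symm

lemma branch_eq_of_mem {u x y : ι} (hy : y ∈ t.branch u x) : t.branch u y = t.branch u x := by
  have key : ∀ {x y : ι}, u ∉ t.segment x y → t.branch u y ⊆ t.branch u x :=
    fun hxy j hj hu => (segment_subset_union _ _ _ hu).elim hxy hj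
  refine (key hy).antisymm (key ?_)
  rwa [segment_comm]

lemma isBranchUnion_biUnion_branch (u : ι) (Y : Set ι) :
    t.IsBranchUnion u (⋃ f ∈ Y, t.branch u f) := by
  refine ⟨by simpa using fun f _ => notMem_branch u f, fun a c ha hac => ?_⟩
  obtain ⟨f, hf, hfa⟩ := Set.mem_iUnion₂.1 ha
  exact Set.mem_biUnion hf (branch_eq_of_mem hfa ▸ hac)

namespace IsTree

variable (ht : t.IsTree)
include ht

lemma segment_eq_support {a b : ι} {p : t.Walk a b} (hp : p.IsPath) :
    t.segment a b = {x | x ∈ p.support} := by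
  classical
  refine Set.Subset.antisymm (fun x hx => hx p) (fun x hx w => ?_)
  have : (w.toPath : t.Walk a b) = p := congrArg Subtype.val
    ((ht.isAcyclic.subsingleton_path a b).elim w.toPath ⟨p, hp⟩)
  exact w.support_toPath_subset_support (this ▸ hx)

lemma finite_segment (a b : ι) : (t.segment a b).Finite := by
  obtain ⟨w⟩ := ht.connected.preconnected a b
  exact w.support.finite_toSet.subset fun x hx => hx w

lemma mem_segment_iff_notMem_segment {u d : ι} (hud : t.Adj u d) (j : ι) :
    d ∈ t.segment u j ↔ u ∉ t.segment d j := by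
  obtain ⟨p, hp, -⟩ := ht.existsUnique_path j u
  obtain ⟨q, hq, -⟩ := ht.existsUnique_path j d
  rw [segment_comm u, segment_comm d, ht.segment_eq_support hp, ht.segment_eq_support hq]
  exact ⟨ht.isAcyclic.ne_mem_support_of_support_of_adj_of_isPath hp hq hud,
    ht.isAcyclic.mem_support_of_ne_mem_support_of_adj_of_isPath hp hq hud⟩

lemma notMem_segment_of_mem_segment {a b c : ι} (hc : c ∈ t.segment a b) (hcb : c ≠ b) :
    b ∉ t.segment a c := by
  classical
  obtain ⟨p, hp, -⟩ := ht.existsUnique_path a b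
  rw [ht.segment_eq_support hp] at hc
  rw [ht.segment_eq_support (hp.takeUntil hc)]
  exact Walk.endpoint_notMem_support_takeUntil hp hc hcb.symm

lemma exists_adj_mem_branch {u j : ι} (hj : j ≠ u) : ∃ y, t.Adj u y ∧ j ∈ t.branch u y := by
  obtain ⟨p, hp, -⟩ := ht.existsUnique_path u j
  cases p with
  | nil => exact absurd rfl hj
  | cons h q => exact ⟨_, h, fun hu => ((Walk.cons_isPath_iff h q).1 hp).2 (hu q)⟩

lemma compl_branch {u d : ι} (hud : t.Adj u d) : (t.branch u d)ᶜ = t.branch d u := by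
  ext j
  simp only [branch, Set.mem_compl_iff, Set.mem_ofPred_eq, not_not]
  rw [ht.mem_segment_iff_notMem_segment hud, not_not]

lemma insert_branch_subset_branch {u d x : ι} (hud : t.Adj u d) (hd : d ∉ t.branch u x) :
    insert u (t.branch u x) ⊆ t.branch d u := by
  rintro j (rfl | hj)
  · simpa [branch, segment_self] using hud.ne'
  · rw [← ht.compl_branch hud]
    intro hdj
    exact hd fun hu => (segment_subset_union x j d hu).elim hj (by rwa [segment_comm])

lemma exists_finite_convex_superset {F : Set ι} (hF : F.Finite) :
    ∃ H : Set ι, H.Finite ∧ F ⊆ H ∧ ∀ ⦃x y⦄, x ∈ H → y ∈ H → t.segment x y ⊆ H := by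
  rcases F.eq_empty_or_nonempty with rfl | ⟨r, -⟩
  · exact ⟨∅, Set.finite_empty, subset_rfl, fun x _ hx => absurd hx (Set.notMem_empty x)⟩
  refine ⟨⋃ f ∈ F, t.segment r f, hF.biUnion fun f _ => ht.finite_segment r f,
    fun f hf => Set.mem_biUnion hf (right_mem_segment r f), fun x y hx hy => ?_⟩
  obtain ⟨f, hf, hxf⟩ := Set.mem_iUnion₂.1 hx
  obtain ⟨g, hg, hyg⟩ := Set.mem_iUnion₂.1 hy
  refine (segment_subset_union x r y).trans (Set.union_subset ?_ ?_)
  · rw [segment_comm]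
    exact (segment_subset_segment_of_mem hxf).trans (Set.subset_biUnion_of_mem hf)
  · exact (segment_subset_segment_of_mem hyg).trans (Set.subset_biUnion_of_mem hg)

variable {V : Type*} [Finite V]

/-- Walking from a node into a heavy branch never returns, and the nodes visited stay in a finite
convex set containing the weighted nodes, so the walk stops at a node all of whose branches,
except the one it came from, are light. -/
theorem exists_balanced_node (Z : Set V) (φ : V → ι) {τ : ℕ} (hZ : τ < Z.ncard) :
    ∃ u x, τ < (Z ∩ φ ⁻¹' (t.branch u x)ᶜ).ncard ∧
      ∀ y, t.Adj u y → y ∉ t.branch u x → (Z ∩ φ ⁻¹' t.branch u y).ncard ≤ τ := by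
  obtain ⟨H, hHfin, hZH, hH⟩ := ht.exists_finite_convex_superset (Z.toFinite.image φ)
  obtain ⟨z, hz⟩ := Set.nonempty_of_ncard_ne_zero (by omega : Z.ncard ≠ 0)
  suffices key : ∀ n u x, (H \ t.branch u x).ncard = n → u ∈ H →
      τ < (Z ∩ φ ⁻¹' (t.branch u x)ᶜ).ncard → ∃ u x, τ < (Z ∩ φ ⁻¹' (t.branch u x)ᶜ).ncard ∧
        ∀ y, t.Adj u y → y ∉ t.branch u x → (Z ∩ φ ⁻¹' t.branch u y).ncard ≤ τ from
    key _ (φ z) (φ z) rfl (hZH ⟨z, hz, rfl⟩) (by simpa [branch_self] using hZ)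
  intro n
  induction n using Nat.strong_induction_on with
  | _ n ih =>
  intro u x hn hu hux
  by_cases hstop : ∀ y, t.Adj u y → y ∉ t.branch u x → (Z ∩ φ ⁻¹' t.branch u y).ncard ≤ τ
  · exact ⟨u, x, hux, hstop⟩
  push Not at hstop
  obtain ⟨d, hud, hdx, hd⟩ := hstop
  obtain ⟨z', hz', hz'd⟩ :=
    Set.nonempty_of_ncard_ne_zero (by omega : (Z ∩ φ ⁻¹' t.branch u d).ncard ≠ 0)
  have hdH : d ∈ H :=
    hH hu (hZH ⟨z', hz', rfl⟩) ((ht.mem_segment_iff_notMem_segment hud _).2 hz'd)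
  have hsub : H \ t.branch d u ⊆ (H \ t.branch u x) \ {u} := fun j hj =>
    ⟨⟨hj.1, fun h => hj.2 (ht.insert_branch_subset_branch hud hdx (Or.inr h))⟩,
      fun h => hj.2 (ht.insert_branch_subset_branch hud hdx (Or.inl h))⟩
  refine ih _ ?_ d u rfl hdH (by rwa [← ht.compl_branch hud, compl_compl])
  calc (H \ t.branch d u).ncard ≤ ((H \ t.branch u x) \ {u}).ncard :=
        Set.ncard_le_ncard hsub (hHfin.sdiff.sdiff)
    _ < n := hn ▸ Set.ncard_sdiff_singleton_lt_of_mem ⟨hu, notMem_branch u x⟩ hHfin.sdiff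

end IsTree

end SimpleGraph

lemma Finset.exists_subset_biUnion_le {α β : Type*} (w : Set β → ℕ)
    (hw : ∀ S T, w (S ∪ T) ≤ w S + w T) (hw₀ : w ∅ = 0) (S : α → Set β) {m τ : ℕ}
    (hm : 2 * m ≤ τ) (Y : Finset α) (hY : ∀ f ∈ Y, w (S f) ≤ τ) :
    ∃ Y' ⊆ Y, w (⋃ f ∈ Y', S f) ≤ τ ∧ (m ≤ w (⋃ f ∈ Y', S f) ∨ Y' = Y) := by
  classical
  induction Y using Finset.induction_on with
  | empty => exact ⟨∅, subset_rfl, by simp [hw₀], Or.inr rfl⟩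
  | insert f Y _ ih =>
    obtain ⟨Y', hY', hle, hcases⟩ := ih fun g hg => hY g (Finset.mem_insert_of_mem hg)
    by_cases hbig : m ≤ w (⋃ g ∈ Y', S g)
    · exact ⟨Y', hY'.trans (Finset.subset_insert _ _), hle, Or.inl hbig⟩
    obtain rfl := hcases.resolve_left hbig
    have hf := hY f (Finset.mem_insert_self f Y')
    by_cases hfbig : m ≤ w (S f)
    · exact ⟨{f}, by simp, by simpa using hf, Or.inl (by simpa using hfbig)⟩
    refine ⟨insert f Y', subset_rfl, ?_, Or.inr rfl⟩
    rw [Finset.set_biUnion_insert]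
    have := hw (S f) (⋃ g ∈ Y', S g)
    omega

theorem SimpleGraph.IsTree.exists_isBranchUnion_ncard_mem_Icc {ι V : Type*} [Finite V]
    {t : SimpleGraph ι} (ht : t.IsTree) (Z : Set V) (φ : V → ι) {k m τ : ℕ}
    (hk : ∀ i, (Z ∩ φ ⁻¹' {i}).ncard ≤ k) (hm : 2 * m ≤ τ) (hmk : m + k ≤ τ)
    (hZ : τ < Z.ncard) :
    ∃ u R, t.IsBranchUnion u R ∧ m ≤ (Z ∩ φ ⁻¹' R).ncard ∧ (Z ∩ φ ⁻¹' R).ncard ≤ τ := by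
  classical
  obtain ⟨u, x, hux, hlight⟩ := ht.exists_balanced_node Z φ hZ
  set Y := ((Z.toFinite.image φ).sdiff (s := φ '' Z) (t := insert u (t.branch u x))).toFinset
  have hY : ∀ f ∈ Y, (Z ∩ φ ⁻¹' t.branch u f).ncard ≤ τ := by
    intro f hf
    simp only [Y, Set.Finite.mem_toFinset, Set.mem_sdiff, Set.mem_insert_iff, not_or] at hf
    obtain ⟨y, huy, hfy⟩ := ht.exists_adj_mem_branch hf.2.1
    rw [branch_eq_of_mem hfy]
    exact hlight y huy fun hy => hf.2.2 (branch_eq_of_mem hy ▸ hfy)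
  obtain ⟨Y', -, hle, hcases⟩ := Finset.exists_subset_biUnion_le
    (fun T => (Z ∩ φ ⁻¹' T).ncard)
    (fun S T => by
      rw [Set.preimage_union, Set.inter_union_distrib_left]
      exact Set.ncard_union_le _ _)
    (by simp) (t.branch u) hm Y hY
  have hR := isBranchUnion_biUnion_branch (t := t) u (Y' : Set ι)
  rw [Finset.set_biUnion_coe] at hR
  refine ⟨u, _, hR, ?_, hle⟩
  obtain hbig | rfl := hcases
  · exact hbig
  have hcover : Z ∩ φ ⁻¹' (t.branch u x)ᶜ ⊆
      (Z ∩ φ ⁻¹' ⋃ f ∈ Y, t.branch u f) ∪ Z ∩ φ ⁻¹' {u} := by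
    rintro z ⟨hz, hzx⟩
    by_cases hzu : φ z = u
    · exact Or.inr ⟨hz, hzu⟩
    refine Or.inl ⟨hz, Set.mem_iUnion₂.2 ⟨φ z, ?_, mem_branch_self hzu⟩⟩
    simp only [Y, Set.Finite.mem_toFinset]
    exact ⟨⟨z, hz, rfl⟩, by simpa [hzu] using hzx⟩
  have := (Set.ncard_le_ncard hcover).trans (Set.ncard_union_le _ _)
  have := hk u
  omega

lemma Set.inter_union_union_subset {α : Type*} {A U X C Z : Set α} (hA : A ⊆ U) :
    A ∩ (X ∪ C ∪ Z) ⊆ A ∩ (C ∪ ((Z ∩ U) ∪ X)) := by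
  rintro x ⟨hxA, (hx | hx) | hx⟩
  · exact ⟨hxA, Or.inr (Or.inr hx)⟩
  · exact ⟨hxA, Or.inl hx⟩
  · exact ⟨hxA, Or.inr (Or.inl ⟨hx, hA hxA⟩)⟩

section collapseBags

variable {ι V : Type*} {b : ι → Set V} {u i : ι} {R : Set ι}

open Classical in
noncomputable def collapseBags (b : ι → Set V) (u : ι) (R : Set ι) (i : ι) : Set V :=
  if i ∈ R then b u else b i

def cutPiece (b : ι → Set V) (u : ι) (R : Set ι) : Set V := b u ∪ ⋃ i ∈ R, b i

lemma collapseBags_of_mem (hi : i ∈ R) : collapseBags b u R i = b u := if_pos hi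

lemma collapseBags_of_notMem (hi : i ∉ R) : collapseBags b u R i = b i := if_neg hi

lemma notMem_and_mem_of_mem_collapseBags {v : V} (hv : v ∉ b u)
    (hvi : v ∈ collapseBags b u R i) : i ∉ R ∧ v ∈ b i := by
  by_cases hi : i ∈ R
  · rw [collapseBags_of_mem hi] at hvi
    exact absurd hvi hv
  · rw [collapseBags_of_notMem hi] at hvi
    exact ⟨hi, hvi⟩

lemma iUnion_collapseBags_subset : ⋃ i, collapseBags b u R i ⊆ ⋃ i, b i := by
  refine Set.iUnion_subset fun i => ?_
  by_cases hi : i ∈ R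
  · exact collapseBags_of_mem hi ▸ Set.subset_iUnion b u
  · exact collapseBags_of_notMem hi ▸ Set.subset_iUnion b i

lemma bag_subset_iUnion_collapseBags (hu : u ∉ R) : b u ⊆ ⋃ i, collapseBags b u R i :=
  collapseBags_of_notMem (b := b) hu ▸ Set.subset_iUnion (collapseBags b u R) u

lemma cutPiece_subset_iUnion : cutPiece b u R ⊆ ⋃ i, b i :=
  Set.union_subset (Set.subset_iUnion b u) (Set.iUnion₂_subset fun i _ => Set.subset_iUnion b i)

lemma iUnion_subset_cutPiece_union_iUnion_collapseBags :
    ⋃ i, b i ⊆ cutPiece b u R ∪ ⋃ i, collapseBags b u R i := by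
  refine Set.iUnion_subset fun i => ?_
  by_cases hi : i ∈ R
  · exact (Set.subset_biUnion_of_mem hi).trans (Set.subset_union_right.trans Set.subset_union_left)
  · exact (collapseBags_of_notMem (b := b) (u := u) hi).ge.trans
      ((Set.subset_iUnion _ i).trans Set.subset_union_right)

end collapseBags

namespace SimpleGraph

variable {ι V : Type*} {G : SimpleGraph V} {t : SimpleGraph ι} {k : ℕ} {b : ι → Set V}

/-- The axioms of a tree decomposition over `t`, with bags of at most `k` vertices, for the
subgraph of `G` induced on the vertices that the bags cover. -/
structure IsDecomposition (G : SimpleGraph V) (t : SimpleGraph ι) (k : ℕ) (b : ι → Set V) :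
    Prop where
  ncard_le : ∀ i, (b i).ncard ≤ k
  exists_mem_of_adj : ∀ ⦃x y⦄, G.Adj x y → x ∈ ⋃ i, b i → y ∈ ⋃ i, b i → ∃ i, x ∈ b i ∧ y ∈ b i
  mem_of_mem_segment : ∀ ⦃v i j c⦄, v ∈ b i → v ∈ b j → c ∈ t.segment i j → v ∈ b c

namespace IsDecomposition

variable {u : ι} {R : Set ι} (hb : IsDecomposition G t k b)
include hb

lemma exists_mem_bag_ncard_fiber_le [Finite V] [Nonempty ι] {Z : Set V} (hZ : Z ⊆ ⋃ i, b i) :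
    ∃ φ : V → ι, (∀ v ∈ Z, v ∈ b (φ v)) ∧ ∀ i, (Z ∩ φ ⁻¹' {i}).ncard ≤ k := by
  choose! φ hφ using fun v (hv : v ∈ Z) => Set.mem_iUnion.1 (hZ hv)
  refine ⟨φ, hφ, fun i => (Set.ncard_le_ncard fun v hv => ?_).trans (hb.ncard_le i)⟩
  exact (show φ v = i from hv.2) ▸ hφ v hv.1

lemma adj_mem_cutPiece_or_mem_iUnion_collapseBags {x y : V} (hxy : G.Adj x y)
    (hx : x ∈ ⋃ i, b i) (hy : y ∈ ⋃ i, b i) :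
    (x ∈ cutPiece b u R ∧ y ∈ cutPiece b u R) ∨
      (x ∈ ⋃ i, collapseBags b u R i ∧ y ∈ ⋃ i, collapseBags b u R i) := by
  obtain ⟨i, hxi, hyi⟩ := hb.exists_mem_of_adj hxy hx hy
  by_cases hi : i ∈ R
  · exact Or.inl ⟨Or.inr (Set.mem_biUnion hi hxi), Or.inr (Set.mem_biUnion hi hyi)⟩
  · refine Or.inr ⟨Set.mem_iUnion.2 ⟨i, ?_⟩, Set.mem_iUnion.2 ⟨i, ?_⟩⟩ <;>
      rwa [collapseBags_of_notMem hi]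

variable (hR : t.IsBranchUnion u R)
include hR

lemma mem_of_notMem_bag {v : V} {i j : ι} (hv : v ∉ b u) (hi : i ∈ R) (hvi : v ∈ b i)
    (hvj : v ∈ b j) : j ∈ R :=
  hR.2 hi fun h => hv (hb.mem_of_mem_segment hvi hvj h)

lemma mem_bag_of_mem_iUnion_collapseBags {v : V} {i : ι} (hi : i ∈ R) (hvi : v ∈ b i)
    (hv : v ∈ ⋃ j, collapseBags b u R j) : v ∈ b u := by
  by_contra hvu
  obtain ⟨j, hvj⟩ := Set.mem_iUnion.1 hv
  obtain ⟨hj, hvj⟩ := notMem_and_mem_of_mem_collapseBags hvu hvj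
  exact hj (hb.mem_of_notMem_bag hR hvu hi hvi hvj)

lemma cutPiece_inter_iUnion_collapseBags_subset :
    cutPiece b u R ∩ ⋃ i, collapseBags b u R i ⊆ b u := by
  rintro v ⟨hv | hv, hv'⟩
  · exact hv
  · obtain ⟨i, hi, hvi⟩ := Set.mem_iUnion₂.1 hv
    exact hb.mem_bag_of_mem_iUnion_collapseBags hR hi hvi hv'

/-- A node other than `u` on the path from a node of `R` to `u` lies in `R`; this is why
collapsing the bags of `R` onto `b u` keeps the connectivity axiom. -/
theorem isDecomposition_collapseBags (ht : t.IsTree) :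
    IsDecomposition G t k (collapseBags b u R) := by
  refine ⟨fun i => ?_, fun x y hxy hx hy => ?_, fun v i j c hvi hvj hcij => ?_⟩
  · by_cases hi : i ∈ R
    · exact collapseBags_of_mem hi ▸ hb.ncard_le u
    · exact collapseBags_of_notMem hi ▸ hb.ncard_le i
  · obtain ⟨i, hxi, hyi⟩ := hb.exists_mem_of_adj hxy (iUnion_collapseBags_subset hx)
      (iUnion_collapseBags_subset hy)
    refine ⟨i, ?_⟩
    by_cases hi : i ∈ R
    · rw [collapseBags_of_mem hi]
      exact ⟨hb.mem_bag_of_mem_iUnion_collapseBags hR hi hxi hx,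
        hb.mem_bag_of_mem_iUnion_collapseBags hR hi hyi hy⟩
    · rw [collapseBags_of_notMem hi]
      exact ⟨hxi, hyi⟩
  by_cases hvu : v ∈ b u
  · by_cases hc : c ∈ R
    · rwa [collapseBags_of_mem hc]
    rw [collapseBags_of_notMem hc]
    have key : ∀ i', v ∈ collapseBags b u R i' → c ∈ t.segment i' u → v ∈ b c := by
      intro i' hvi' hci'
      by_cases hi' : i' ∈ R
      · by_cases hcu : c = u
        · exact hcu ▸ hvu
        · exact absurd (hR.2 hi' (ht.notMem_segment_of_mem_segment hci' hcu)) hc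
      · rw [collapseBags_of_notMem hi'] at hvi'
        exact hb.mem_of_mem_segment hvi' hvu hci'
    rcases segment_subset_union i u j hcij with hci | hcj
    · exact key i hvi hci
    · exact key j hvj (segment_comm u j ▸ hcj)
  · obtain ⟨hi, hvi⟩ := notMem_and_mem_of_mem_collapseBags hvu hvi
    obtain ⟨-, hvj⟩ := notMem_and_mem_of_mem_collapseBags hvu hvj
    have hvc := hb.mem_of_mem_segment hvi hvj hcij
    have hc : c ∉ R := fun hc => hi (hb.mem_of_notMem_bag hR hvu hc hvc hvi)
    rwa [collapseBags_of_notMem hc]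

variable [Finite V] {Z : Set V} {φ : V → ι} (hφ : ∀ v ∈ Z, v ∈ b (φ v))
include hφ

lemma ncard_inter_iUnion_collapseBags_union_add_le :
    ((Z ∩ ⋃ i, collapseBags b u R i) ∪ b u).ncard + (Z ∩ φ ⁻¹' R).ncard ≤ Z.ncard + k := by
  have hsub : (Z ∩ ⋃ i, collapseBags b u R i) ∪ b u ⊆ (Z \ (Z ∩ φ ⁻¹' R)) ∪ b u := by
    rintro v (⟨hvZ, hv⟩ | hv)
    · by_cases hvu : v ∈ b u
      · exact Or.inr hvu
      · exact Or.inl ⟨hvZ, fun hP =>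
          hvu (hb.mem_bag_of_mem_iUnion_collapseBags hR hP.2 (hφ v hvZ) hv)⟩
    · exact Or.inr hv
  have := (Set.ncard_le_ncard hsub).trans (Set.ncard_union_le _ _)
  have := Set.ncard_sdiff_add_ncard_of_subset (Set.inter_subset_left (s := Z) (t := φ ⁻¹' R))
  have := hb.ncard_le u
  omega

lemma ncard_cutPiece_inter_le {C : Set V} (hC : C ⊆ ⋃ i, collapseBags b u R i) :
    (cutPiece b u R ∩ (b u ∪ C ∪ Z)).ncard ≤ k + (Z ∩ φ ⁻¹' R).ncard := by
  have hsub : cutPiece b u R ∩ (b u ∪ C ∪ Z) ⊆ b u ∪ Z ∩ φ ⁻¹' R := by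
    rintro v ⟨hvA, (hv | hv) | hv⟩
    · exact Or.inl hv
    · exact Or.inl (hb.cutPiece_inter_iUnion_collapseBags_subset hR ⟨hvA, hC hv⟩)
    · by_cases hvu : v ∈ b u
      · exact Or.inl hvu
      obtain ⟨i, hi, hvi⟩ := Set.mem_iUnion₂.1 (hvA.resolve_left hvu)
      exact Or.inr ⟨hv, hb.mem_of_notMem_bag hR hvu hi hvi (hφ v hv)⟩
  have := (Set.ncard_le_ncard hsub).trans (Set.ncard_union_le _ _)
  have := hb.ncard_le u
  omega

end IsDecomposition

structure IsSplitting (G : SimpleGraph V) (U C : Set V) (l : List (Set V)) : Prop where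
  nonempty : ∀ A ∈ l, A.Nonempty
  subset : ∀ A ∈ l, A ⊆ U
  exists_mem : ∀ x ∈ U, ∃ A ∈ l, x ∈ A
  exists_mem_of_adj : ∀ ⦃x y⦄, G.Adj x y → x ∈ U → y ∈ U → ∃ A ∈ l, x ∈ A ∧ y ∈ A
  pairwise : l.Pairwise fun A B => A ∩ B ⊆ C

namespace IsSplitting

lemma exists_length_le_one (G : SimpleGraph V) (U C : Set V) :
    ∃ l, IsSplitting G U C l ∧ l.length ≤ 1 := by
  rcases U.eq_empty_or_nonempty with rfl | hU
  · exact ⟨[], ⟨by simp, by simp, by simp, by simp, by simp⟩, by simp⟩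
  · exact ⟨[U], ⟨by simpa, by simp, fun x hx => ⟨U, by simp, hx⟩,
      fun x y _ hx hy => ⟨U, by simp, hx, hy⟩, by simp⟩, by simp⟩

lemma cons {U U' A X C : Set V} {l : List (Set V)} (h : IsSplitting G U' C l)
    (hA : A.Nonempty) (hAU : A ⊆ U) (hU'U : U' ⊆ U) (hU : U ⊆ A ∪ U') (hAU' : A ∩ U' ⊆ X)
    (hadj : ∀ ⦃x y⦄, G.Adj x y → x ∈ U → y ∈ U → (x ∈ A ∧ y ∈ A) ∨ (x ∈ U' ∧ y ∈ U')) :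
    IsSplitting G U (X ∪ C) (A :: l) := by
  refine ⟨?_, ?_, fun x hx => ?_, fun x y hxy hx hy => ?_, ?_⟩
  · simpa using ⟨hA, h.nonempty⟩
  · simpa using ⟨hAU, fun B hB => (h.subset B hB).trans hU'U⟩
  · rcases hU hx with hxA | hxU'
    · exact ⟨A, List.mem_cons_self, hxA⟩
    · obtain ⟨B, hB, hxB⟩ := h.exists_mem x hxU'
      exact ⟨B, List.mem_cons_of_mem _ hB, hxB⟩
  · rcases hadj hxy hx hy with ⟨hxA, hyA⟩ | ⟨hxU', hyU'⟩
    · exact ⟨A, List.mem_cons_self, hxA, hyA⟩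
    · obtain ⟨B, hB, hxB, hyB⟩ := h.exists_mem_of_adj hxy hxU' hyU'
      exact ⟨B, List.mem_cons_of_mem _ hB, hxB, hyB⟩
  · exact List.Pairwise.cons (fun B hB x hx => Or.inl (hAU' ⟨hx.1, h.subset B hB hx.2⟩))
      (h.pairwise.imp fun hAB => hAB.trans Set.subset_union_right)

lemma get_of_univ {C : Set V} {l : List (Set V)} (h : IsSplitting G Set.univ C l) :
    (∀ i, (l.get i).Nonempty) ∧ (∀ v, ∃ i, v ∈ l.get i) ∧
      (∀ ⦃u v⦄, G.Adj u v → ∃ i, u ∈ l.get i ∧ v ∈ l.get i) ∧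
      ∀ i j, i ≠ j → l.get i ∩ l.get j ⊆ C := by
  refine ⟨fun i => h.nonempty _ (List.get_mem l i), fun v => ?_, fun u v huv => ?_,
    fun i j hij => ?_⟩
  · obtain ⟨A, hA, hvA⟩ := h.exists_mem v trivial
    obtain ⟨i, rfl⟩ := List.mem_iff_get.1 hA
    exact ⟨i, hvA⟩
  · obtain ⟨A, hA, huA, hvA⟩ := h.exists_mem_of_adj huv trivial trivial
    obtain ⟨i, rfl⟩ := List.mem_iff_get.1 hA
    exact ⟨i, huA, hvA⟩
  · have hpw := List.pairwise_iff_get.1 h.pairwise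
    rcases lt_or_gt_of_ne hij with hlt | hlt
    · exact hpw i j hlt
    · exact Set.inter_comm (l.get i) _ ▸ hpw j i hlt

end IsSplitting

theorem IsDecomposition.exists_isSplitting [Finite V] (ht : t.IsTree) {m s : ℕ} (hkm : k < m)
    (hms : 2 * m + k ≤ s) {Z : Set V} (hb : IsDecomposition G t k b) (hZ : Z ⊆ ⋃ i, b i) :
    ∃ C l n, C ⊆ ⋃ i, b i ∧ C.ncard ≤ k * n ∧ (m - k) * n ≤ Z.ncard ∧ l.length ≤ n + 1 ∧
      IsSplitting G (⋃ i, b i) C l ∧ ∀ A ∈ l, (A ∩ (C ∪ Z)).ncard ≤ s := by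
  induction hN : Z.ncard using Nat.strong_induction_on generalizing b Z with
  | _ N ih =>
  by_cases hZs : Z.ncard ≤ s
  · obtain ⟨l, hl, hlen⟩ := IsSplitting.exists_length_le_one G (⋃ i, b i) ∅
    exact ⟨∅, l, 0, Set.empty_subset _, by simp, by simp, hlen, hl,
      fun A _ => (Set.ncard_le_ncard (by simp)).trans hZs⟩
  obtain ⟨z, hz⟩ := Set.nonempty_of_ncard_ne_zero (by omega : Z.ncard ≠ 0)
  have : Nonempty ι := ⟨(Set.mem_iUnion.1 (hZ hz)).choose⟩
  obtain ⟨φ, hφ, hφk⟩ := hb.exists_mem_bag_ncard_fiber_le hZ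
  obtain ⟨u, R, hR, hmR, hRs⟩ :=
    ht.exists_isBranchUnion_ncard_mem_Icc Z φ hφk (by omega : 2 * m ≤ s - k) (by omega) (by omega)
  have hZ' := hb.ncard_inter_iUnion_collapseBags_union_add_le hR hφ
  obtain ⟨C', l', n', hC', hC'n, hZ'n, hl'n, hl', hwt'⟩ :=
    ih _ (by omega) (Z := (Z ∩ ⋃ i, collapseBags b u R i) ∪ b u)
      (hb.isDecomposition_collapseBags hR ht)
      (Set.union_subset Set.inter_subset_right (bag_subset_iUnion_collapseBags hR.1)) rfl
  obtain ⟨v, hvZ, hvR⟩ := Set.nonempty_of_ncard_ne_zero (by omega : (Z ∩ φ ⁻¹' R).ncard ≠ 0)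
  have hsplit := hl'.cons ⟨v, Or.inr (Set.mem_biUnion (show φ v ∈ R from hvR) (hφ v hvZ))⟩
    cutPiece_subset_iUnion iUnion_collapseBags_subset
    iUnion_subset_cutPiece_union_iUnion_collapseBags
    (hb.cutPiece_inter_iUnion_collapseBags_subset hR)
    fun x y hxy => hb.adj_mem_cutPiece_or_mem_iUnion_collapseBags hxy
  refine ⟨b u ∪ C', cutPiece b u R :: l', n' + 1,
    Set.union_subset (Set.subset_iUnion b u) (hC'.trans iUnion_collapseBags_subset), ?_, ?_,
    by simpa using hl'n, hsplit, ?_⟩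
  · have := Set.ncard_union_le (b u) C'
    have := hb.ncard_le u
    rw [Nat.mul_succ]
    omega
  · rw [Nat.mul_succ]
    omega
  rintro A (_ | ⟨_, hA⟩)
  · have := hb.ncard_cutPiece_inter_le hR hφ hC'
    omega
  · exact (Set.ncard_le_ncard (Set.inter_union_union_subset (hl'.subset A hA))).trans (hwt' A hA)

end SimpleGraph

namespace TreeDecomp

open SimpleGraph

variable {V : Type} {G : SimpleGraph V} (D : TreeDecomp G)

lemma iUnion_bag : ⋃ i, D.bag i = Set.univ :=
  Set.eq_univ_of_forall fun v => Set.mem_iUnion.2 (D.mem_bag v)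

lemma mem_bag_of_mem_segment {v : V} {i j c : D.ι} (hi : v ∈ D.bag i) (hj : v ∈ D.bag j)
    (hc : c ∈ D.t.segment i j) : v ∈ D.bag c := by
  obtain ⟨w⟩ := (D.bag_connected v).preconnected ⟨i, hi⟩ ⟨j, hj⟩
  have hcw : c ∈ (w.map (Embedding.induce _).toHom).support := hc _
  obtain ⟨c', -, rfl⟩ := List.mem_map.1 (Walk.support_map _ w ▸ hcw)
  exact c'.2

lemma isDecomposition {k : ℕ} (hk : ∀ i, (D.bag i).ncard ≤ k) : G.IsDecomposition D.t k D.bag :=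
  ⟨hk, fun _ _ hxy _ _ => D.edge_bag hxy, fun _ _ _ _ => D.mem_bag_of_mem_segment⟩

end TreeDecomp

theorem treewidth_splitting_general (k s p : ℕ) (hk : 0 < k) (hp : 0 < p)
    (hsk : 12 * k ≤ s) {V : Type} [Fintype V] (G : SimpleGraph V)
    (htw : TreewidthLE G (k - 1)) (W : Set V) (hW : W.ncard ≤ p * s) :
    ∃ (C : Set V) (t : ℕ) (A : Fin t → Set V),
      t < 6 * p ∧
      C.ncard < 6 * p * k ∧
      (∀ i, (A i).Nonempty) ∧
      (∀ i, (A i ∩ (C ∪ W)).ncard ≤ s) ∧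
      (∀ v : V, ∃ i, v ∈ A i) ∧
      (∀ ⦃u v : V⦄, G.Adj u v → ∃ i, u ∈ A i ∧ v ∈ A i) ∧
      (∀ i j, i ≠ j → A i ∩ A j ⊆ C) := by
  obtain ⟨D, hD⟩ := htw
  have hb := D.isDecomposition (k := k) fun i => by have := hD i; omega
  obtain ⟨C, l, n, -, hC, hn, hl, hsplit, hwt⟩ := hb.exists_isSplitting D.tree
    (m := (s + 2) / 3) (s := s) (by omega) (by omega) (Z := W) (by simp [D.iUnion_bag])
  rw [D.iUnion_bag] at hsplit
  have hn4 : n ≤ 4 * p := by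
    have : s ≤ 4 * ((s + 2) / 3 - k) := by omega
    have : s * n ≤ s * (4 * p) := by nlinarith
    exact Nat.le_of_mul_le_mul_left this (by omega)
  obtain ⟨hne, hcov, hadj, hpw⟩ := hsplit.get_of_univ
  refine ⟨C, l.length, l.get, by omega, ?_, hne, fun i => hwt _ (List.get_mem l i), hcov, hadj,
    hpw⟩
  nlinarith

/-- Splitting lemma for graphs of bounded treewidth: if `tw(G) < k`, `s ≥ 12k`
and `|W| ≤ p·s`, then there are `C ⊆ V(G)` and nonempty sets `A₁, …, A_t`
(`t < 6p`) with `|C| < 6pk`, `|A_i ∩ (C ∪ W)| ≤ s`, `G = G[A₁] ∪ ⋯ ∪ G[A_t]`,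
and `A_i ∩ A_j ⊆ C` for `i ≠ j`. -/
theorem treewidth_splitting (k s p : ℕ) (hk : 0 < k) (hs : 0 < s) (hp : 0 < p)
    (hsk : 12 * k ≤ s) {V : Type} [Fintype V] (G : SimpleGraph V)
    (htw : TreewidthLE G (k - 1)) (W : Set V) (hW : W.ncard ≤ p * s) :
    ∃ (C : Set V) (t : ℕ) (A : Fin t → Set V),
      t < 6 * p ∧
      C.ncard < 6 * p * k ∧
      (∀ i, (A i).Nonempty) ∧
      (∀ i, (A i ∩ (C ∪ W)).ncard ≤ s) ∧
      (∀ v : V, ∃ i, v ∈ A i) ∧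
      (∀ ⦃u v : V⦄, G.Adj u v → ∃ i, u ∈ A i ∧ v ∈ A i) ∧
      (∀ i j, i ≠ j → A i ∩ A j ⊆ C) :=
  treewidth_splitting_general k s p hk hp hsk G htw W hW
end

section
/- Let d, p ≥ 0 be integers, let B_d be the complete binary tree of depth d with weight function t_d assigning 2^{−i} to each vertex of depth i, and let S be a subtree of B_d with root s such that t_d(V(S)) ≥ (2p+1)·t_d(s). Then S contains a minor of B_p rooted in s. -/
/-- Vertices of the complete binary tree of depth `d`: a vertex at depth `i`
is a sequence of `i` child-choices. -/
def BinVert (d : ℕ) : Type := (i : Fin (d + 1)) × (Fin i.val → Bool)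

/-- `u` is an ancestor of (or equal to) `v`: the sequence of `u` is a prefix of
the sequence of `v`. -/
def BinDesc {d : ℕ} (u v : BinVert d) : Prop :=
  ∃ h : u.1.val ≤ v.1.val, ∀ j : Fin u.1.val, v.2 (Fin.castLE h j) = u.2 j

/-- `u` is the parent of `v` in the complete binary tree. -/
def BinParent {d : ℕ} (u v : BinVert d) : Prop :=
  v.1.val = u.1.val + 1 ∧ BinDesc u v

/-- The complete binary tree of depth `d`, as a graph. -/
def binTree (d : ℕ) : SimpleGraph (BinVert d) := SimpleGraph.fromRel BinParent

/-- The root of the complete binary tree of depth `d`. -/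
def binRoot (d : ℕ) : BinVert d := ⟨⟨0, Nat.succ_pos d⟩, Fin.elim0⟩

/-- The weight `t_d` of a vertex at depth `i` is `2 ^ (-i)`. -/
noncomputable def binWt {d : ℕ} (u : BinVert d) : ℝ := (2 : ℝ)⁻¹ ^ u.1.val

/-- A graph `G` contains, within a vertex set `S`, a minor of a graph `H` with
root `h` rooted in a vertex `s`: pairwise disjoint nonempty connected bags
inside `S`, one for each vertex of `H`, `s` lying in the bag of `h`, and each
edge of `H` realized by an edge of `G` between the corresponding bags. -/
def RootedMinorIn {V W : Type} (G : SimpleGraph V) (S : Set V)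
    (H : SimpleGraph W) (h : W) (s : V) : Prop :=
  ∃ μ : W → Set V,
    (∀ x, (μ x).Nonempty) ∧ (∀ x, μ x ⊆ S) ∧
    (∀ x y, x ≠ y → Disjoint (μ x) (μ y)) ∧
    (∀ x, (G.induce (μ x)).Connected) ∧
    (∀ ⦃x y⦄, H.Adj x y → ∃ u ∈ μ x, ∃ v ∈ μ y, G.Adj u v) ∧
    s ∈ μ h

namespace BB
variable {d : ℕ}
instance : DecidableEq (BinVert d) := by unfold BinVert; exact inferInstance
instance : Fintype (BinVert d) := by unfold BinVert; exact inferInstance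

lemma desc_refl (u : BinVert d) : BinDesc u u := ⟨le_refl _, fun j => rfl⟩

lemma desc_trans {u v w : BinVert d} (h1 : BinDesc u v) (h2 : BinDesc v w) : BinDesc u w :=
  ⟨h1.1.trans h2.1, fun j => (h2.2 (Fin.castLE h1.1 j)).trans (h1.2 j)⟩

lemma eq_of_desc_of_le {u v : BinVert d} (h : BinDesc u v) (hd : v.1.val ≤ u.1.val) : u = v := by
  obtain ⟨h1, h2⟩ := h
  obtain ⟨⟨i, hi⟩, f⟩ := u
  obtain ⟨⟨i', hi'⟩, f'⟩ := v
  simp only at h1 h2 hd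
  have : i = i' := le_antisymm h1 hd
  subst this
  have : f = f' := by
    funext j
    exact (h2 j).symm
  subst this
  rfl

lemma depth_lt_of_desc_ne {u v : BinVert d} (h : BinDesc u v) (hne : u ≠ v) :
    u.1.val < v.1.val := by
  rcases lt_or_ge u.1.val v.1.val with h' | h'
  · exact h'
  · exact absurd (eq_of_desc_of_le h h') hne

lemma desc_antisymm {u v : BinVert d} (h1 : BinDesc u v) (h2 : BinDesc v u) : u = v :=
  eq_of_desc_of_le h1 h2.1

lemma desc_of_desc_desc {m x y : BinVert d} (hmy : BinDesc m y) (hxy : BinDesc x y)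
    (h : m.1.val ≤ x.1.val) : BinDesc m x :=
  ⟨h, fun j => ((hxy.2 (Fin.castLE h j)).symm.trans (hmy.2 j) : _)⟩

def parentV (v : BinVert d) (h : 0 < v.1.val) : BinVert d :=
  ⟨⟨v.1.val - 1, by have := v.1.2; omega⟩, fun j => v.2 ⟨j.val, by have h2 : j.val < v.1.val - 1 := j.2; omega⟩⟩

lemma parentV_parent {v : BinVert d} (h : 0 < v.1.val) : BinParent (parentV v h) v :=
  ⟨by show v.1.val = v.1.val - 1 + 1; omega, Nat.sub_le _ _, fun j => rfl⟩

lemma desc_parentV {m v : BinVert d} (hmv : BinDesc m v) (hlt : m.1.val < v.1.val)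
    (h : 0 < v.1.val) : BinDesc m (parentV v h) :=
  ⟨by show m.1.val ≤ v.1.val - 1; omega, fun j => hmv.2 j⟩

def childV (v : BinVert d) (h : v.1.val < d) (b : Bool) : BinVert d :=
  ⟨⟨v.1.val + 1, by omega⟩, fun j => if hj : j.val < v.1.val then v.2 ⟨j, hj⟩ else b⟩

lemma childV_parent {v : BinVert d} (h : v.1.val < d) (b : Bool) :
    BinParent v (childV v h b) := by
  refine ⟨rfl, Nat.le_succ _, fun j => ?_⟩
  exact dif_pos j.2

lemma childV_depth {v : BinVert d} (h : v.1.val < d) (b : Bool) :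
    (childV v h b).1.val = v.1.val + 1 := rfl

lemma desc_childV_of_desc {v u : BinVert d} (hvu : BinDesc v u) (hlt : v.1.val < u.1.val)
    (h : v.1.val < d) : BinDesc (childV v h (u.2 ⟨v.1.val, hlt⟩)) u := by
  refine ⟨hlt, fun j => ?_⟩
  show u.2 _ = if hj : j.val < v.1.val then v.2 ⟨j, hj⟩ else u.2 ⟨v.1.val, hlt⟩
  by_cases hj : j.val < v.1.val
  · rw [dif_pos hj]
    exact hvu.2 ⟨j.val, hj⟩
  · rw [dif_neg hj]
    have hje : j.val = v.1.val := by
      have h2 : j.val < v.1.val + 1 := j.2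
      omega
    apply congrArg
    exact Fin.ext hje

lemma bit_of_desc_childV {v u : BinVert d} {b : Bool} {h : v.1.val < d}
    (hd : BinDesc (childV v h b) u) (hlt : v.1.val < u.1.val) :
    u.2 ⟨v.1.val, hlt⟩ = b := by
  have key := hd.2 ⟨v.1.val, Nat.lt_succ_self _⟩
  have key2 : u.2 ⟨v.1.val, hlt⟩ = if hj : v.1.val < v.1.val then v.2 ⟨v.1.val, hj⟩ else b := key
  rwa [dif_neg (lt_irrefl _)] at key2

lemma desc_of_childV_desc {v u : BinVert d} {b : Bool} {h : v.1.val < d}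
    (hd : BinDesc (childV v h b) u) : BinDesc v u :=
  desc_trans (childV_parent h b).2 hd

lemma binTree_adj {u v : BinVert d} :
    (binTree d).Adj u v ↔ u ≠ v ∧ (BinParent u v ∨ BinParent v u) := by
  simp [binTree, SimpleGraph.fromRel_adj]

lemma adj_of_parent {u v : BinVert d} (h : BinParent u v) : (binTree d).Adj u v := by
  rw [binTree_adj]
  refine ⟨fun he => ?_, Or.inl h⟩
  subst he
  have := h.1
  omega

lemma induce_adj {S : Set (BinVert d)} {x y : ↥S} :
    ((binTree d).induce S).Adj x y ↔ (binTree d).Adj x.val y.val := by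
  simp [SimpleGraph.induce]

/-- every walk in the induced graph from a non-descendant of `m` to a
descendant of `m` passes through `m`. -/
lemma walk_sep {S : Set (BinVert d)} {m : BinVert d} :
    ∀ (x y : ↥S) (_ : ((binTree d).induce S).Walk x y)
      (_ : ¬ BinDesc m x.val) (_ : BinDesc m y.val), m ∈ S := by
  intro x y w
  induction w with
  | nil => intro h1 h2; exact absurd h2 h1
  | @cons a b c hab p ih =>
    intro h1 h2
    by_cases hb : BinDesc m b.val
    · rw [induce_adj, binTree_adj] at hab
      rcases hab.2 with hpar | hpar
      · -- a parent of b
        by_cases hmb : m = b.val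
        · exact hmb ▸ b.2
        · exfalso
          have hlt : m.1.val < b.val.1.val := depth_lt_of_desc_ne hb hmb
          have : m.1.val ≤ a.val.1.val := by
            have := hpar.1
            omega
          exact h1 (desc_of_desc_desc hb hpar.2 this)
      · -- b parent of a
        exact absurd (desc_trans hb hpar.2) h1
    · exact ih hb h2

lemma mem_of_connected_between {S : Set (BinVert d)}
    (hconn : ((binTree d).induce S).Connected)
    {x u m : BinVert d} (hx : x ∈ S) (hu : u ∈ S)
    (hmu : BinDesc m u) (hmx : ¬ BinDesc m x) : m ∈ S := by
  obtain ⟨w⟩ := hconn.preconnected ⟨x, hx⟩ ⟨u, hu⟩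
  exact walk_sep _ _ w hmx hmu

lemma connected_of_parent_closed {T : Set (BinVert d)} {r : BinVert d} (hr : r ∈ T)
    (hd2 : ∀ u ∈ T, BinDesc r u)
    (hpar : ∀ u, u ∈ T → u ≠ r → ∃ h : 0 < u.1.val, parentV u h ∈ T) :
    ((binTree d).induce T).Connected := by
  rw [SimpleGraph.connected_iff]
  refine ⟨?_, ⟨⟨r, hr⟩⟩⟩
  have key : ∀ n (u : BinVert d) (hu : u ∈ T), u.1.val ≤ n →
      ((binTree d).induce T).Reachable ⟨r, hr⟩ ⟨u, hu⟩ := by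
    intro n
    induction n with
    | zero =>
      intro u hu hn
      have : r = u := eq_of_desc_of_le (hd2 u hu) (by omega)
      subst this
      exact SimpleGraph.Reachable.refl _
    | succ n ih =>
      intro u hu hn
      by_cases hur : u = r
      · subst hur; exact SimpleGraph.Reachable.refl _
      · obtain ⟨hpos, hpmem⟩ := hpar u hu hur
        have hdp : (parentV u hpos).1.val ≤ n := by
          have : (parentV u hpos).1.val = u.1.val - 1 := rfl
          omega
        have hreach := ih (parentV u hpos) hpmem hdp
        have hadj : ((binTree d).induce T).Adj ⟨parentV u hpos, hpmem⟩ ⟨u, hu⟩ := by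
          rw [induce_adj]
          exact adj_of_parent (parentV_parent hpos)
        exact hreach.trans hadj.reachable
  intro x y
  exact ((key x.val.1.val x.val x.2 le_rfl).symm.trans
    (key y.val.1.val y.val y.2 le_rfl) : _)

noncomputable def wSum (A : Set (BinVert d)) : ℝ := ∑ u ∈ A.toFinite.toFinset, binWt u

lemma wSum_eq_finsum (A : Set (BinVert d)) : ∑ᶠ u ∈ A, binWt u = wSum A := by
  rw [wSum, ← finsum_mem_coe_finset]
  congr 1
  simp

lemma binWt_pos (u : BinVert d) : 0 < binWt u := pow_pos (by norm_num) _

lemma wSum_nonneg (A : Set (BinVert d)) : 0 ≤ wSum A :=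
  Finset.sum_nonneg fun u _ => (binWt_pos u).le

lemma wSum_singleton (v : BinVert d) : wSum {v} = binWt v := by
  rw [wSum]
  have : (Set.toFinite {v}).toFinset = {v} := by ext; simp
  rw [this, Finset.sum_singleton]

lemma wSum_union {A B : Set (BinVert d)} (h : Disjoint A B) :
    wSum (A ∪ B) = wSum A + wSum B := by
  unfold wSum
  rw [← Finset.sum_union]
  · congr 1
    ext x
    simp
  · rw [Finset.disjoint_left]
    intro a ha hb
    simp only [Set.Finite.mem_toFinset] at ha hb
    exact Set.disjoint_left.mp h ha hb

lemma nonempty_of_wSum_pos {A : Set (BinVert d)} (h : 0 < wSum A) : A.Nonempty := by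
  by_contra hne
  rw [Set.not_nonempty_iff_eq_empty] at hne
  subst hne
  rw [wSum] at h
  have : (Set.toFinite (∅ : Set (BinVert d))).toFinset = ∅ := by ext; simp
  rw [this, Finset.sum_empty] at h
  exact lt_irrefl _ h

lemma binWt_childV {v : BinVert d} (h : v.1.val < d) (b : Bool) :
    binWt (childV v h b) = 2⁻¹ * binWt v := by
  show (2 : ℝ)⁻¹ ^ (v.1.val + 1) = 2⁻¹ * (2:ℝ)⁻¹ ^ v.1.val
  rw [pow_succ]
  ring

lemma wSum_top {A : Set (BinVert d)} {v : BinVert d} (hv : v ∈ A)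
    (hA : ∀ u ∈ A, BinDesc v u) (h : v.1.val = d) : wSum A = binWt v := by
  have : A = {v} := by
    ext u
    constructor
    · intro hu
      have hd := hA u hu
      have : u.1.val ≤ d := by have := u.1.2; omega
      exact (eq_of_desc_of_le hd (by omega)).symm
    · intro hu
      rw [Set.mem_singleton_iff] at hu
      subst hu; exact hv
  rw [this, wSum_singleton]

lemma wSum_split {A : Set (BinVert d)} {v : BinVert d} (hv : v ∈ A)
    (hA : ∀ u ∈ A, BinDesc v u) (h : v.1.val < d) :
    wSum A = binWt v + (wSum (A ∩ {u | BinDesc (childV v h false) u})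
      + wSum (A ∩ {u | BinDesc (childV v h true) u})) := by
  set Df := A ∩ {u | BinDesc (childV v h false) u} with hDf
  set Dt := A ∩ {u | BinDesc (childV v h true) u} with hDt
  have hnotv : ∀ b (hb : BinDesc (childV v h b) v), False := by
    intro b hb
    have := hb.1
    have h2 : (childV v h b).1.val = v.1.val + 1 := rfl
    omega
  have hset : A = {v} ∪ (Df ∪ Dt) := by
    ext u
    constructor
    · intro hu
      by_cases huv : u = v
      · exact Or.inl huv
      · have hlt : v.1.val < u.1.val := depth_lt_of_desc_ne (hA u hu) (fun he => huv he.symm)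
        have hd := desc_childV_of_desc (hA u hu) hlt h
        right
        cases hb2 : u.2 ⟨v.1.val, hlt⟩ with
        | false => rw [hb2] at hd; exact Or.inl ⟨hu, hd⟩
        | true => rw [hb2] at hd; exact Or.inr ⟨hu, hd⟩
    · intro hu
      rcases hu with hu | hu | hu
      · rw [Set.mem_singleton_iff] at hu; subst hu; exact hv
      · exact hu.1
      · exact hu.1
  have hdisj1 : Disjoint ({v} : Set (BinVert d)) (Df ∪ Dt) := by
    rw [Set.disjoint_left]
    intro a ha hb
    rw [Set.mem_singleton_iff] at ha
    subst ha
    rcases hb with hb | hb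
    · exact hnotv false hb.2
    · exact hnotv true hb.2
  have hdisj2 : Disjoint Df Dt := by
    rw [Set.disjoint_left]
    intro a ha hb
    have hlt : v.1.val < a.1.val := by
      have := ha.2.1
      have h2 : (childV v h false).1.val = v.1.val + 1 := rfl
      omega
    have h1 := bit_of_desc_childV ha.2 hlt
    have h2 := bit_of_desc_childV hb.2 hlt
    rw [h1] at h2
    exact Bool.noConfusion h2
  rw [hset, wSum_union hdisj1, wSum_union hdisj2, wSum_singleton]

lemma pathclosed {S : Set (BinVert d)} {s : BinVert d}
    (hconn : ((binTree d).induce S).Connected) (hs : s ∈ S) :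
    ∀ m u, u ∈ S → BinDesc s m → BinDesc m u → m ∈ S := by
  intro m u hu hsm hmu
  by_cases hms : m = s
  · subst hms; exact hs
  · refine mem_of_connected_between hconn hs hu hmu (fun hms' => ?_)
    exact hms (desc_antisymm hms' hsm)

lemma descend (p : ℕ) {S : Set (BinVert d)} {s : BinVert d} (hs : s ∈ S)
    (hpc : ∀ m u, u ∈ S → BinDesc s m → BinDesc m u → m ∈ S) :
    ∀ n (v : BinVert d), v ∈ S → BinDesc s v → d - v.1.val ≤ n →
      (2 * p + 3 : ℝ) * binWt v ≤ wSum (S ∩ {u | BinDesc v u}) →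
      ∃ (w : BinVert d) (hw : w.1.val < d), w ∈ S ∧ BinDesc s w ∧
        ∀ b, childV w hw b ∈ S ∧
          (2 * p + 1 : ℝ) * binWt (childV w hw b)
            ≤ wSum (S ∩ {u | BinDesc (childV w hw b) u}) := by
  intro n
  induction n with
  | zero =>
    intro v hv hsv hn hwt
    exfalso
    -- at depth ≥ d the weight bound is impossible
    have hvd : v.1.val = d := by omega
    have hA : ∀ u ∈ S ∩ {u | BinDesc v u}, BinDesc v u := fun u hu => hu.2
    have hvmem : v ∈ S ∩ {u | BinDesc v u} :=
      Set.mem_inter hv (Set.mem_setOf.mpr (desc_refl v))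
    have := wSum_top hvmem hA hvd
    rw [this] at hwt
    have hp : (0:ℝ) ≤ (p : ℝ) := Nat.cast_nonneg _
    nlinarith [binWt_pos v]
  | succ n ih =>
    intro v hv hsv hn hwt
    have hvd : v.1.val < d := by
      by_contra hvd
      have hvd' : v.1.val = d := by have := v.1.2; omega
      have hA : ∀ u ∈ S ∩ {u | BinDesc v u}, BinDesc v u := fun u hu => hu.2
      have hvmem : v ∈ S ∩ {u | BinDesc v u} :=
        Set.mem_inter hv (Set.mem_setOf.mpr (desc_refl v))
      have := wSum_top hvmem hA hvd'
      rw [this] at hwt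
      have hp : (0:ℝ) ≤ (p : ℝ) := Nat.cast_nonneg _
      nlinarith [binWt_pos v]
    have hA : ∀ u ∈ S ∩ {u | BinDesc v u}, BinDesc v u := fun u hu => hu.2
    have hvmem : v ∈ S ∩ {u | BinDesc v u} :=
      Set.mem_inter hv (Set.mem_setOf.mpr (desc_refl v))
    have hsplit := wSum_split hvmem hA hvd
    have hInt : ∀ b, (S ∩ {u | BinDesc v u}) ∩ {u | BinDesc (childV v hvd b) u}
        = S ∩ {u | BinDesc (childV v hvd b) u} := by
      intro b
      ext u
      constructor
      · intro hu; exact ⟨hu.1.1, hu.2⟩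
      · intro hu; exact ⟨⟨hu.1, desc_of_childV_desc hu.2⟩, hu.2⟩
    rw [hInt false, hInt true] at hsplit
    set Wf := wSum (S ∩ {u | BinDesc (childV v hvd false) u}) with hWf
    set Wt := wSum (S ∩ {u | BinDesc (childV v hvd true) u}) with hWt
    have hchdesc : ∀ b, BinDesc s (childV v hvd b) :=
      fun b => desc_trans hsv (childV_parent hvd b).2
    have hmemS : ∀ b, 0 < wSum (S ∩ {u | BinDesc (childV v hvd b) u}) →
        childV v hvd b ∈ S := by
      intro b hpos
      obtain ⟨u, hu⟩ := nonempty_of_wSum_pos hpos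
      exact hpc _ u hu.1 (hchdesc b) hu.2
    have hwchild : ∀ b, binWt (childV v hvd b) = 2⁻¹ * binWt v := fun b => binWt_childV hvd b
    by_cases hcase : ∃ b, (2 * p + 3 : ℝ) * binWt (childV v hvd b)
        ≤ wSum (S ∩ {u | BinDesc (childV v hvd b) u})
    · obtain ⟨b, hb⟩ := hcase
      have hpos : 0 < wSum (S ∩ {u | BinDesc (childV v hvd b) u}) := by
        have hp : (0:ℝ) ≤ (p : ℝ) := Nat.cast_nonneg _
        nlinarith [binWt_pos (childV v hvd b)]
      have hmem := hmemS b hpos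
      have hdep : (childV v hvd b).1.val = v.1.val + 1 := rfl
      exact ih (childV v hvd b) hmem (hchdesc b) (by omega) hb
    · push_neg at hcase
      refine ⟨v, hvd, hv, hsv, fun b => ?_⟩
      have hp : (0:ℝ) ≤ (p : ℝ) := Nat.cast_nonneg _
      have hwv := binWt_pos v
      have hgoal : (2 * p + 1 : ℝ) * binWt (childV v hvd b)
          ≤ wSum (S ∩ {u | BinDesc (childV v hvd b) u}) := by
        have hcf := hcase false
        have hct := hcase true
        rw [hwchild false] at hcf
        rw [hwchild true] at hct
        rw [hwchild b]
        cases b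
        · show (2 * p + 1 : ℝ) * (2⁻¹ * binWt v) ≤ Wf
          linarith
        · show (2 * p + 1 : ℝ) * (2⁻¹ * binWt v) ≤ Wt
          linarith
      have hpos : 0 < wSum (S ∩ {u | BinDesc (childV v hvd b) u}) := by
        nlinarith [binWt_pos (childV v hvd b)]
      exact ⟨hmemS b hpos, hgoal⟩

lemma binVert_ext {x y : BinVert d} (h1 : x.1.val = y.1.val)
    (h2 : ∀ j : Fin x.1.val, x.2 j = y.2 ⟨j.val, h1 ▸ j.2⟩) : x = y :=
  eq_of_desc_of_le ⟨le_of_eq h1, fun j => (h2 j).symm⟩ (le_of_eq h1.symm)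

lemma depth_zero_eq {x : BinVert d} (h : x.1.val = 0) : x = binRoot d :=
  binVert_ext h (fun j => absurd j.2 (by omega))

def tailV {p : ℕ} (x : BinVert (p + 1)) (h : 0 < x.1.val) : BinVert p :=
  ⟨⟨x.1.val - 1, by have := x.1.2; omega⟩,
   fun j => x.2 ⟨j.val + 1, by have h2 : j.val < x.1.val - 1 := j.2; omega⟩⟩

lemma tailV_depth {p : ℕ} (x : BinVert (p + 1)) (h : 0 < x.1.val) :
    (tailV x h).1.val = x.1.val - 1 := rfl

lemma tailV_inj {p : ℕ} {x y : BinVert (p + 1)} {hx : 0 < x.1.val} {hy : 0 < y.1.val}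
    (hbit : x.2 ⟨0, hx⟩ = y.2 ⟨0, hy⟩) (ht : tailV x hx = tailV y hy) : x = y := by
  have h1 : x.1.val = y.1.val := by
    have := congrArg (fun z : BinVert p => z.1.val) ht
    simp only [tailV_depth] at this
    omega
  have hdesc : BinDesc (tailV x hx) (tailV y hy) := ht ▸ desc_refl _
  refine binVert_ext h1 (fun j => ?_)
  rcases Nat.eq_zero_or_pos j.val with hj | hj
  · have e1 : x.2 j = x.2 ⟨0, hx⟩ := congrArg x.2 (Fin.ext hj)
    have e2 : y.2 ⟨j.val, h1 ▸ j.2⟩ = y.2 ⟨0, hy⟩ := congrArg y.2 (Fin.ext hj)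
    rw [e1, e2, hbit]
  · obtain ⟨k, hk⟩ : ∃ k, j.val = k + 1 := ⟨j.val - 1, by omega⟩
    have hklt : k < x.1.val - 1 := by have := j.2; omega
    have key := hdesc.2 ⟨k, hklt⟩
    -- key : (tailV y hy).2 (castLE _ ⟨k, _⟩) = (tailV x hx).2 ⟨k, _⟩
    have key2 : y.2 ⟨k + 1, by omega⟩ = x.2 ⟨k + 1, by omega⟩ := key
    have e1 : x.2 j = x.2 ⟨k + 1, by omega⟩ := congrArg x.2 (Fin.ext hk)
    have e2 : y.2 ⟨j.val, h1 ▸ j.2⟩ = y.2 ⟨k + 1, by omega⟩ := congrArg y.2 (Fin.ext hk)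
    rw [e1, e2, key2]

lemma tailV_parent {p : ℕ} {x y : BinVert (p + 1)} (hxy : BinParent x y)
    (hx : 0 < x.1.val) (hy : 0 < y.1.val) :
    BinParent (tailV x hx) (tailV y hy) := by
  obtain ⟨hdep, hle, hpre⟩ := hxy
  refine ⟨?_, ?_, fun j => ?_⟩
  · show y.1.val - 1 = x.1.val - 1 + 1
    omega
  · show x.1.val - 1 ≤ y.1.val - 1
    omega
  · have hjlt : j.val + 1 < x.1.val := by have := j.2; have h2 : j.val < x.1.val - 1 := j.2; omega
    exact hpre ⟨j.val + 1, hjlt⟩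

lemma bit_eq_of_parent {p : ℕ} {x y : BinVert (p + 1)} (hxy : BinParent x y)
    (hx : 0 < x.1.val) (hy : 0 < y.1.val) : y.2 ⟨0, hy⟩ = x.2 ⟨0, hx⟩ :=
  hxy.2.2 ⟨0, hx⟩

lemma main {d : ℕ} (p : ℕ) : ∀ (s : BinVert d) (S : Set (BinVert d)),
    s ∈ S → ((binTree d).induce S).Connected → (∀ u ∈ S, BinDesc s u) →
    (2 * (p : ℝ) + 1) * binWt s ≤ wSum S →
    RootedMinorIn (binTree d) S (binTree p) (binRoot p) s := by
  induction p with
  | zero =>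
    intro s S hs hconn hdesc hw
    have hss : ∀ x : BinVert 0, x = binRoot 0 :=
      fun x => depth_zero_eq (by have := x.1.2; omega)
    refine ⟨fun _ => {s}, fun x => ⟨s, rfl⟩, fun x => Set.singleton_subset_iff.mpr hs,
      ?_, ?_, ?_, rfl⟩
    · intro x y hxy
      exact absurd ((hss x).trans (hss y).symm) hxy
    · intro x
      show ((binTree d).induce ({s} : Set (BinVert d))).Connected
      apply connected_of_parent_closed (r := s) (Set.mem_singleton s)
      · intro u hu
        rw [Set.mem_singleton_iff] at hu
        rw [hu]
        exact desc_refl s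
      · intro u hu hne
        rw [Set.mem_singleton_iff] at hu
        exact absurd hu hne
    · intro x y hadj
      rw [binTree_adj] at hadj
      exact absurd ((hss x).trans (hss y).symm) hadj.1
  | succ p ih =>
    intro s S hs hconn hdesc hw
    have hpc := pathclosed hconn hs
    have hSdesc : S ∩ {u | BinDesc s u} = S := by
      ext u
      exact ⟨fun h => h.1, fun h => ⟨h, hdesc u h⟩⟩
    have hw2 : (2 * (p : ℝ) + 3) * binWt s ≤ wSum (S ∩ {u | BinDesc s u}) := by
      rw [hSdesc]
      push_cast at hw
      linarith
    obtain ⟨w, hwd, hwS, hsw, hchild⟩ :=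
      descend p hs hpc d s hs (desc_refl s) (by omega) hw2
    set c : Bool → BinVert d := fun b => childV w hwd b with hcdef
    set Sb : Bool → Set (BinVert d) := fun b => S ∩ {u | BinDesc (childV w hwd b) u} with hSbdef
    have hcS : ∀ b, c b ∈ S := fun b => (hchild b).1
    have hscb : ∀ b, BinDesc s (c b) := fun b => desc_trans hsw (childV_parent hwd b).2
    have hcmem : ∀ b, c b ∈ Sb b :=
      fun b => Set.mem_inter (hcS b) (Set.mem_setOf.mpr (desc_refl _))
    have hSbS : ∀ b, Sb b ⊆ S := fun b => Set.inter_subset_left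
    have hSbdesc : ∀ b, ∀ u ∈ Sb b, BinDesc (c b) u := fun b u hu => hu.2
    have hcdepth : ∀ b, (c b).1.val = w.1.val + 1 := fun b => rfl
    have hSbconn : ∀ b, ((binTree d).induce (Sb b)).Connected := by
      intro b
      apply connected_of_parent_closed (hcmem b) (hSbdesc b)
      intro u hu hne
      have hlt : (c b).1.val < u.1.val := depth_lt_of_desc_ne hu.2 (fun he => hne he.symm)
      have hpos : 0 < u.1.val := by have := hcdepth b; omega
      have hdp : BinDesc (c b) (parentV u hpos) := desc_parentV hu.2 hlt hpos
      refine ⟨hpos, Set.mem_inter ?_ (Set.mem_setOf.mpr hdp)⟩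
      exact hpc _ u hu.1 (desc_trans (hscb b) hdp) (parentV_parent hpos).2
    have hIH : ∀ b, RootedMinorIn (binTree d) (Sb b) (binTree p) (binRoot p) (c b) :=
      fun b => ih (c b) (Sb b) (hcmem b) (hSbconn b) (hSbdesc b) (hchild b).2
    have hcall : ∀ b, ∃ μ : BinVert p → Set (BinVert d),
        (∀ x, (μ x).Nonempty) ∧ (∀ x, μ x ⊆ Sb b) ∧
        (∀ x y, x ≠ y → Disjoint (μ x) (μ y)) ∧
        (∀ x, ((binTree d).induce (μ x)).Connected) ∧
        (∀ ⦃x y⦄, (binTree p).Adj x y → ∃ u ∈ μ x, ∃ v ∈ μ y, (binTree d).Adj u v) ∧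
        c b ∈ μ (binRoot p) := fun b => hIH b
    choose μc hc1 hc2 hc3 hc4 hc5 hc6 using hcall
    set P : Set (BinVert d) := {u | BinDesc s u ∧ BinDesc u w} with hPdef
    have hsP : s ∈ P := ⟨desc_refl s, hsw⟩
    have hwP : w ∈ P := ⟨hsw, desc_refl w⟩
    have hPS : P ⊆ S := fun u hu => hpc u w hwS hu.1 hu.2
    have hPdisj : ∀ b z, Disjoint P (μc b z) := by
      intro b z
      rw [Set.disjoint_left]
      intro a haP haμ
      have ha2 := hc2 b z haμ
      have h1 : a.1.val ≤ w.1.val := haP.2.1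
      have h2 : (c b).1.val ≤ a.1.val := ha2.2.1
      have h3 := hcdepth b
      omega
    have hbdisj : ∀ z z', Disjoint (μc false z) (μc true z') := by
      intro z z'
      rw [Set.disjoint_left]
      intro a h1 h2
      have ha1 := (hc2 false z h1).2
      have ha2 := (hc2 true z' h2).2
      have hlt : w.1.val < a.1.val := by
        have := ha1.1
        have h3 : (childV w hwd false).1.val = w.1.val + 1 := rfl
        omega
      have := (bit_of_desc_childV ha1 hlt).symm.trans (bit_of_desc_childV ha2 hlt)
      exact Bool.noConfusion this
    classical
    set μ : BinVert (p + 1) → Set (BinVert d) :=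
      fun x => if h : 0 < x.1.val then μc (x.2 ⟨0, h⟩) (tailV x h) else P with hμdef
    have hμpos : ∀ x (h : 0 < x.1.val), μ x = μc (x.2 ⟨0, h⟩) (tailV x h) :=
      fun x h => dif_pos h
    have hμzero : ∀ x (h : ¬ 0 < x.1.val), μ x = P := fun x h => dif_neg h
    have hedge : ∀ x y : BinVert (p + 1), BinParent x y →
        ∃ u ∈ μ x, ∃ v ∈ μ y, (binTree d).Adj u v := by
      intro x y hp
      have hy : 0 < y.1.val := by have := hp.1; omega
      by_cases hx : 0 < x.1.val
      · rw [hμpos x hx, hμpos y hy]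
        have hbit : y.2 ⟨0, hy⟩ = x.2 ⟨0, hx⟩ := bit_eq_of_parent hp hx hy
        rw [hbit]
        exact hc5 (x.2 ⟨0, hx⟩) (adj_of_parent (tailV_parent hp hx hy))
      · rw [hμzero x hx, hμpos y hy]
        have htz : tailV y hy = binRoot p := by
          apply depth_zero_eq
          rw [tailV_depth]
          have := hp.1
          omega
        rw [htz]
        exact ⟨w, hwP, c (y.2 ⟨0, hy⟩), hc6 _, adj_of_parent (childV_parent hwd _)⟩
    refine ⟨μ, ?_, ?_, ?_, ?_, ?_, ?_⟩
    · intro x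
      by_cases hx : 0 < x.1.val
      · rw [hμpos x hx]; exact hc1 _ _
      · rw [hμzero x hx]; exact ⟨s, hsP⟩
    · intro x
      by_cases hx : 0 < x.1.val
      · rw [hμpos x hx]; exact (hc2 _ _).trans (hSbS _)
      · rw [hμzero x hx]; exact hPS
    · intro x y hxy
      by_cases hx : 0 < x.1.val <;> by_cases hy : 0 < y.1.val
      · rw [hμpos x hx, hμpos y hy]
        by_cases hb : x.2 ⟨0, hx⟩ = y.2 ⟨0, hy⟩
        · rw [hb]
          exact hc3 _ _ _ (fun hteq => hxy (tailV_inj hb hteq))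
        · cases hbx : x.2 ⟨0, hx⟩ <;> cases hby : y.2 ⟨0, hy⟩
          · exact absurd (hbx.trans hby.symm) hb
          · exact hbdisj _ _
          · exact (hbdisj _ _).symm
          · exact absurd (hbx.trans hby.symm) hb
      · rw [hμpos x hx, hμzero y hy]
        exact (hPdisj _ _).symm
      · rw [hμzero x hx, hμpos y hy]
        exact hPdisj _ _
      · exact absurd (depth_zero_eq (by omega) |>.trans (depth_zero_eq (show y.1.val = 0 by omega)).symm) hxy
    · intro x
      by_cases hx : 0 < x.1.val
      · rw [hμpos x hx]; exact hc4 _ _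
      · rw [hμzero x hx]
        apply connected_of_parent_closed hsP (fun u hu => hu.1)
        intro u hu hne
        have hlt : s.1.val < u.1.val := depth_lt_of_desc_ne hu.1 (fun he => hne he.symm)
        have hpos : 0 < u.1.val := by omega
        exact ⟨hpos, desc_parentV hu.1 hlt hpos,
          desc_trans (parentV_parent hpos).2 hu.2⟩
    · intro x y hadj
      rw [binTree_adj] at hadj
      rcases hadj.2 with hp' | hp'
      · exact hedge x y hp'
      · obtain ⟨u, hu, v, hv, ha⟩ := hedge y x hp'
        exact ⟨v, hv, u, hu, ha.symm⟩
    · rw [hμzero (binRoot (p + 1)) (lt_irrefl 0)]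
      exact hsP

end BB

/-- If `S` is a subtree of the complete binary tree `B_d` rooted at `s` with
`t_d(V(S)) ≥ (2p+1) · t_d(s)`, then `S` contains a minor of `B_p` rooted in `s`. -/


theorem binary_subtree_minor (d p : ℕ) (s : BinVert d) (S : Set (BinVert d))
    (hs : s ∈ S) (hconn : ((binTree d).induce S).Connected)
    (hdesc : ∀ u ∈ S, BinDesc s u)
    (hw : ((2 * p + 1 : ℕ) : ℝ) * binWt s ≤ ∑ᶠ u ∈ S, binWt u) :
    RootedMinorIn (binTree d) S (binTree p) (binRoot p) s := by
  rw [BB.wSum_eq_finsum S] at hw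
  push_cast at hw
  exact BB.main p s S hs hconn hdesc (by linarith)
end

section
/- For all integers d ≥ 0, a ≥ 1 and n ≥ 2^a, the graph T_d(P_n) has treedepth at least a·d + 1, where P_n is the path on n vertices. -/
/-- `le` is the (reflexive) ancestor order of a rooted forest on the vertices of
`G` in which every edge of `G` joins a vertex to an ancestor or descendant:
it is a partial order whose principal down-sets are chains, and every edge of
`G` is comparable. -/
def IsForestOrder {V : Type} (G : SimpleGraph V) (le : V → V → Prop) : Prop :=
  Reflexive le ∧ Transitive le ∧ AntiSymmetric le ∧
    (∀ v x y, le x v → le y v → le x y ∨ le y x) ∧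
    ∀ ⦃u v : V⦄, G.Adj u v → le u v ∨ le v u

/-- `G` has treedepth at most `n`: there is a rooted forest of depth at most
`n - 1` on `V(G)` (each vertex has at most `n` ancestors, itself included)
whose ancestor-descendant pairs cover all edges of `G`. -/
def TreedepthLE {V : Type} (G : SimpleGraph V) (n : ℕ) : Prop :=
  ∃ le : V → V → Prop, IsForestOrder G le ∧ ∀ v, {u | le u v}.ncard ≤ n

/-- The treedepth of `G`. -/
noncomputable def treedepth {V : Type} (G : SimpleGraph V) : ℕ :=
  sInf {n | TreedepthLE G n}

/-- Vertices of `T_d(H)`, where `W` is the vertex type of `H`: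
`T_0(H)` is a single vertex (the handle); `T_{d+1}(H)` consists of a new handle
together with, for each vertex `x` of `H`, a copy of `T_d(H)` whose handle is
identified with `x`. -/
def TVert (W : Type) : ℕ → Type
  | 0 => Unit
  | d + 1 => Unit ⊕ (W × TVert W d)

/-- The handle of `T_d(H)`. -/
def THandle (W : Type) : ∀ d, TVert W d
  | 0 => ()
  | _ + 1 => Sum.inl ()

/-- Adjacency of `T_d(H)`: the handle is adjacent to all vertices of the copy of
`H` (the handles of the attached copies of `T_{d-1}(H)`), two such vertices are
adjacent iff they are adjacent in `H`, and within each attached copy adjacency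
is that of `T_{d-1}(H)`. -/
def TAdj {W : Type} (H : SimpleGraph W) : ∀ d, TVert W d → TVert W d → Prop
  | 0, _, _ => False
  | d + 1, u, v =>
    match u, v with
    | Sum.inl _, Sum.inl _ => False
    | Sum.inl _, Sum.inr (_, b) => b = THandle W d
    | Sum.inr (_, a), Sum.inl _ => a = THandle W d
    | Sum.inr (x, a), Sum.inr (y, b) =>
      (x = y ∧ TAdj H d a b) ∨ (H.Adj x y ∧ a = THandle W d ∧ b = THandle W d)

/-- The graph `T_d(H)`. -/
def TGraph {W : Type} (H : SimpleGraph W) (d : ℕ) : SimpleGraph (TVert W d) :=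
  SimpleGraph.fromRel (TAdj H d)

/-!
A forest order on a finite connected graph has a root below every vertex. For the path
`P_n` with `n ≥ 2^(k+1)`, one side of the root contains a subpath on `2^k` vertices; the
order restricted to it has, by induction, a vertex with `k + 1` ancestors, and the root is
one more. For `T_{d+1}(H)`, the roots of the copies of `T_d(H)` attached at the vertices of
`H` inherit a forest order on `H` (adjacent vertices of `H` have comparable handles, and each
root lies below its handle), so some root has at least `a` ancestors among the roots of other
copies; inside its own copy, induction provides a vertex with `a·d + 1` ancestors.
-/

open Function SimpleGraph

namespace IsForestOrder

variable {V V' : Type} {G : SimpleGraph V} {G' : SimpleGraph V'} {le : V → V → Prop}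

protected lemma refl (h : IsForestOrder G le) (v : V) : le v v := h.1 v

protected lemma trans (h : IsForestOrder G le) {u v w : V} (huv : le u v) (hvw : le v w) :
    le u w :=
  h.2.1 huv hvw

protected lemma antisymm (h : IsForestOrder G le) {u v : V} (huv : le u v) (hvu : le v u) :
    u = v :=
  h.2.2.1 huv hvu

lemma total_of_le (h : IsForestOrder G le) {x y v : V} (hx : le x v) (hy : le y v) :
    le x y ∨ le y x :=
  h.2.2.2.1 v x y hx hy

lemma comparable_of_adj (h : IsForestOrder G le) {u v : V} (huv : G.Adj u v) :
    le u v ∨ le v u :=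
  h.2.2.2.2 huv

lemma comparable_of_le_of_le (h : IsForestOrder G le) {r s p q : V} (hrp : le r p)
    (hsq : le s q) (hpq : le p q ∨ le q p) : le r s ∨ le s r := by
  rcases hpq with hpq | hqp
  · exact h.total_of_le (h.trans hrp hpq) hsq
  · exact h.total_of_le hrp (h.trans hsq hqp)

lemma comap (h : IsForestOrder G le) {f : V' → V} (hf : Injective f)
    (hadj : ∀ ⦃x y⦄, G'.Adj x y → le (f x) (f y) ∨ le (f y) (f x)) :
    IsForestOrder G' fun x y => le (f x) (f y) :=
  ⟨fun _ => h.refl _, fun _ _ _ => h.trans, fun _ _ hxy hyx => hf (h.antisymm hxy hyx),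
    fun _ _ _ => h.total_of_le, hadj⟩

lemma comap_hom (h : IsForestOrder G le) (f : G' →g G) (hf : Injective f) :
    IsForestOrder G' fun x y => le (f x) (f y) :=
  h.comap hf fun _ _ hxy => h.comparable_of_adj (f.map_adj hxy)

lemma exists_minimal [Finite V] [Nonempty V] (h : IsForestOrder G le) :
    ∃ m, ∀ u, le u m → u = m := by
  obtain ⟨m, hm⟩ := Finite.exists_min fun v => {u | le u v}.ncard
  refine ⟨m, fun u hum => by_contra fun hne => ?_⟩
  have hlt : {y | le y u} ⊂ {y | le y m} :=
    ⟨fun y hy => h.trans hy hum, fun hsub => hne (h.antisymm hum (hsub (h.refl m)))⟩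
  exact (Set.ncard_lt_ncard hlt).not_ge (hm u)

lemma le_of_adj_of_minimal (h : IsForestOrder G le) {m u v : V} (hm : ∀ u, le u m → u = m)
    (hmu : le m u) (huv : G.Adj u v) : le m v := by
  rcases h.comparable_of_adj huv with huv | hvu
  · exact h.trans hmu huv
  · rcases h.total_of_le hmu hvu with hmv | hvm
    · exact hmv
    · rw [hm v hvm]
      exact h.refl m

lemma exists_root [Finite V] (h : IsForestOrder G le) (hc : G.Connected) :
    ∃ m, ∀ u, le m u := by
  have := hc.nonempty
  obtain ⟨m, hm⟩ := h.exists_minimal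
  refine ⟨m, fun u => ?_⟩
  induction (reachable_iff_reflTransGen m u).1 (hc m u) with
  | refl => exact h.refl m
  | tail _ huv ih => exact h.le_of_adj_of_minimal hm ih huv

end IsForestOrder

lemma ncard_comap_add_ncard_le {V V' : Type} [Finite V] (r : V → V → Prop) {f : V' → V}
    (hf : Injective f) (x : V') {T : Set V} (hT : Disjoint T (Set.range f))
    (hTx : ∀ t ∈ T, r t (f x)) :
    {y | r (f y) (f x)}.ncard + T.ncard ≤ {u | r u (f x)}.ncard := by
  have hdisj : Disjoint (f '' {y | r (f y) (f x)}) T :=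
    hT.symm.mono_left (Set.image_subset_range _ _)
  calc {y | r (f y) (f x)}.ncard + T.ncard = (f '' {y | r (f y) (f x)}).ncard + T.ncard := by
        rw [Set.ncard_image_of_injective _ hf]
    _ = (f '' {y | r (f y) (f x)} ∪ T).ncard := (Set.ncard_union_eq hdisj).symm
    _ ≤ {u | r u (f x)}.ncard := by
        refine Set.ncard_le_ncard (Set.union_subset ?_ hTx)
        rintro _ ⟨y, hy, rfl⟩
        exact hy

section Treedepth

variable {V : Type} {G : SimpleGraph V}

lemma treedepthLE_natCard [Finite V] (G : SimpleGraph V) : TreedepthLE G (Nat.card V) := by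
  let e := Finite.equivFin V
  refine ⟨fun u v => e u ≤ e v, ⟨fun _ => le_rfl, fun _ _ _ => le_trans,
    fun _ _ huv hvu => e.injective (le_antisymm huv hvu),
    fun _ _ _ _ _ => le_total _ _, fun _ _ _ => le_total _ _⟩, fun v => ?_⟩
  exact (Set.ncard_le_ncard (Set.subset_univ _)).trans (Set.ncard_univ V).le

lemma lt_treedepth_iff [Finite V] {k : ℕ} :
    k < treedepth G ↔ ∀ le, IsForestOrder G le → ∃ v, k < {u | le u v}.ncard := by
  constructor
  · intro hk le h
    by_contra! hle
    exact hk.not_ge (Nat.sInf_le ⟨le, h, hle⟩)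
  · intro hG
    show k + 1 ≤ sInf {n | TreedepthLE G n}
    refine le_csInf ⟨_, treedepthLE_natCard G⟩ ?_
    rintro n ⟨le, h, hn⟩
    obtain ⟨v, hv⟩ := hG le h
    exact hv.trans_le (hn v)

lemma treedepth_pos [Finite V] [Nonempty V] : 0 < treedepth G :=
  lt_treedepth_iff.2 fun _ h =>
    ⟨Classical.arbitrary V, (Set.ncard_pos (Set.toFinite _)).2 ⟨_, h.refl _⟩⟩

end Treedepth

section Path

def pathGraphShiftHom {s n : ℕ} (i : ℕ) (h : i + s ≤ n) : pathGraph s →g pathGraph n where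
  toFun j := ⟨i + j, by omega⟩
  map_rel' := by
    intro j k hjk
    simp only [pathGraph_adj] at hjk ⊢
    omega

lemma pathGraphShiftHom_injective {s n : ℕ} (i : ℕ) (h : i + s ≤ n) :
    Injective (pathGraphShiftHom i h) :=
  fun _ _ hjk => Fin.ext (Nat.add_left_cancel (congrArg Fin.val hjk))

theorem lt_treedepth_pathGraph {k n : ℕ} (hn : 2 ^ k ≤ n) : k < treedepth (pathGraph n) := by
  induction k generalizing n with
  | zero =>
    have : Nonempty (Fin n) := ⟨⟨0, hn⟩⟩
    exact treedepth_pos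
  | succ k ih =>
    refine lt_treedepth_iff.2 fun le h => ?_
    obtain ⟨n, rfl⟩ : ∃ n', n = n' + 1 :=
      ⟨n - 1, by have := Nat.one_le_two_pow (n := k + 1); omega⟩
    obtain ⟨m, hm⟩ := h.exists_root (pathGraph_connected n)
    obtain ⟨i, hi, hmi⟩ :
        ∃ i, i + 2 ^ k ≤ n + 1 ∧ (m.val < i ∨ i + 2 ^ k ≤ m.val) := by
      rw [pow_succ] at hn
      rcases lt_or_ge m.val (2 ^ k) with hlt | hge
      · exact ⟨m + 1, by omega, by omega⟩
      · exact ⟨0, by omega, by omega⟩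
    have hf := pathGraphShiftHom_injective i hi
    obtain ⟨x, hx⟩ := lt_treedepth_iff.1 (ih le_rfl) _ (h.comap_hom _ hf)
    refine ⟨pathGraphShiftHom i hi x, ?_⟩
    have hm_disj : Disjoint {m} (Set.range (pathGraphShiftHom i hi)) := by
      refine Set.disjoint_singleton_left.2 fun ⟨j, hj⟩ => ?_
      have : i + j = m.val := congrArg Fin.val hj
      omega
    have := ncard_comap_add_ncard_le le hf x hm_disj (by simpa using hm _)
    rw [Set.ncard_singleton] at this
    omega

end Path

namespace TVert

instance finite (W : Type) [Finite W] : ∀ d, Finite (TVert W d)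
  | 0 => inferInstanceAs (Finite Unit)
  | d + 1 => have := finite W d; inferInstanceAs (Finite (Unit ⊕ W × TVert W d))

def inCopy {W : Type} {d : ℕ} (x : W) (b : TVert W d) : TVert W (d + 1) := Sum.inr (x, b)

lemma inCopy_inj {W : Type} {d : ℕ} {x y : W} {a b : TVert W d} :
    inCopy x a = inCopy y b ↔ x = y ∧ a = b :=
  Sum.inr_injective.eq_iff.trans Prod.ext_iff

lemma inCopy_injective {W : Type} {d : ℕ} (x : W) : Injective (inCopy (d := d) x) :=
  fun _ _ h => (inCopy_inj.1 h).2

end TVert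

namespace TGraph

open TVert

variable {W : Type} {H : SimpleGraph W} {d : ℕ}

lemma adj_iff {u v : TVert W d} :
    (TGraph H d).Adj u v ↔ u ≠ v ∧ (TAdj H d u v ∨ TAdj H d v u) :=
  fromRel_adj (TAdj H d) u v

lemma adj_inCopy (x : W) {a b : TVert W d} (hab : (TGraph H d).Adj a b) :
    (TGraph H (d + 1)).Adj (inCopy x a) (inCopy x b) := by
  rw [adj_iff] at hab ⊢
  refine ⟨fun h => hab.1 (inCopy_inj.1 h).2, ?_⟩
  rcases hab.2 with h | h
  · exact Or.inl (Or.inl ⟨rfl, h⟩)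
  · exact Or.inr (Or.inl ⟨rfl, h⟩)

lemma adj_handle_inCopy (x : W) :
    (TGraph H (d + 1)).Adj (THandle W (d + 1)) (inCopy x (THandle W d)) :=
  adj_iff.2 ⟨nofun, Or.inl rfl⟩

lemma adj_inCopy_handle {x y : W} (hxy : H.Adj x y) :
    (TGraph H (d + 1)).Adj (inCopy x (THandle W d)) (inCopy y (THandle W d)) :=
  adj_iff.2 ⟨fun h => hxy.ne (inCopy_inj.1 h).1, Or.inl (Or.inr ⟨hxy, rfl, rfl⟩)⟩

variable (H d) in
def copyHom (x : W) : TGraph H d →g TGraph H (d + 1) where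
  toFun := inCopy x
  map_rel' := adj_inCopy x

lemma copyHom_injective (x : W) : Injective (copyHom H d x) :=
  inCopy_injective x

variable (H) in
lemma reachable_handle : ∀ d (v : TVert W d), (TGraph H d).Reachable (THandle W d) v
  | 0, () => Reachable.refl _
  | _ + 1, Sum.inl () => Reachable.refl _
  | d + 1, Sum.inr (x, b) =>
    (adj_handle_inCopy x).reachable.trans ((reachable_handle d b).map (copyHom H d x))

variable (H d) in
lemma connected : (TGraph H d).Connected :=
  have : Nonempty (TVert W d) := ⟨THandle W d⟩
  ⟨fun u v => (reachable_handle H d u).symm.trans (reachable_handle H d v)⟩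

end TGraph

open TVert TGraph in
theorem lt_treedepth_TGraph {W : Type} [Finite W] {H : SimpleGraph W} {a : ℕ}
    (hH : a < treedepth H) (d : ℕ) : a * d < treedepth (TGraph H d) := by
  induction d with
  | zero =>
    have : Nonempty (TVert W 0) := ⟨THandle W 0⟩
    simpa using treedepth_pos
  | succ d ih =>
    refine lt_treedepth_iff.2 fun le h => ?_
    have hcopy (x : W) : IsForestOrder (TGraph H d) fun a b => le (inCopy x a) (inCopy x b) :=
      h.comap_hom (copyHom H d x) (copyHom_injective x)
    choose root hroot using fun x => (hcopy x).exists_root (connected H d)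
    have hroot_inj : Injective fun x => inCopy x (root x) := fun _ _ hxy => (inCopy_inj.1 hxy).1
    have hroots : IsForestOrder H fun x y => le (inCopy x (root x)) (inCopy y (root y)) :=
      h.comap hroot_inj fun x y hxy => h.comparable_of_le_of_le (hroot x _) (hroot y _)
        (h.comparable_of_adj (adj_inCopy_handle hxy))
    obtain ⟨x₀, hx₀⟩ := lt_treedepth_iff.1 hH _ hroots
    obtain ⟨w, hw⟩ := lt_treedepth_iff.1 ih _ (hcopy x₀)
    refine ⟨inCopy x₀ w, ?_⟩
    set S := {y | le (inCopy y (root y)) (inCopy x₀ (root x₀))}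
    have hdisj :
        Disjoint ((fun y => inCopy y (root y)) '' (S \ {x₀})) (Set.range (inCopy x₀)) := by
      rintro _ h₁ h₂ _ ht
      obtain ⟨y, hy, rfl⟩ := h₁ ht
      obtain ⟨b, hb⟩ := h₂ ht
      exact hy.2 (inCopy_inj.1 hb).1.symm
    have := ncard_comap_add_ncard_le le (inCopy_injective x₀) w hdisj
      (by rintro _ ⟨y, hy, rfl⟩; exact h.trans hy.1 (hroot x₀ w))
    rw [Set.ncard_image_of_injective _ hroot_inj,
      Set.ncard_sdiff_singleton_of_mem (show x₀ ∈ S from h.refl _)] at this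
    rw [Nat.mul_succ]
    omega

theorem treedepth_TGraph_path_general (d a n : ℕ) (hn : 2 ^ a ≤ n) :
    a * d + 1 ≤ treedepth (TGraph (SimpleGraph.pathGraph n) d) :=
  lt_treedepth_TGraph (lt_treedepth_pathGraph hn) d

/-- For `d ≥ 0`, `a ≥ 1` and `n ≥ 2^a`, the graph `T_d(P_n)` has treedepth at
least `a·d + 1`. -/
theorem treedepth_TGraph_path (d a n : ℕ) (ha : 1 ≤ a) (hn : 2 ^ a ≤ n) :
    a * d + 1 ≤ treedepth (TGraph (SimpleGraph.pathGraph n) d) :=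
  treedepth_TGraph_path_general d a n hn
end

section
/- Let H, H₁, …, H_t be induced subgraphs of a graph G such that G = H ∪ H₁ ∪ … ∪ H_t; H_i ∩ H_j ⊆ H whenever 1 ≤ i < j ≤ t; and H_i ∩ H is a clique for each i. Then td(G) ≤ td(H) + max over i of td(H_i − V(H)). -/
open Function SimpleGraph

structure IsForestRel {α : Type*} (le : α → α → Prop) : Prop where
  refl : Reflexive le
  trans : Transitive le
  antisymm : AntiSymmetric le
  chain : ∀ v x y, le x v → le y v → le x y ∨ le y x

theorem isForestOrder_iff {V : Type} {G : SimpleGraph V} {le : V → V → Prop} :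
    IsForestOrder G le ↔ IsForestRel le ∧ ∀ ⦃u v : V⦄, G.Adj u v → le u v ∨ le v u :=
  ⟨fun ⟨h₁, h₂, h₃, h₄, h₅⟩ => ⟨⟨h₁, h₂, h₃, h₄⟩, h₅⟩,
    fun ⟨⟨h₁, h₂, h₃, h₄⟩, h₅⟩ => ⟨h₁, h₂, h₃, h₄, h₅⟩⟩

theorem IsForestOrder.isForestRel {V : Type} {G : SimpleGraph V} {le : V → V → Prop}
    (h : IsForestOrder G le) : IsForestRel le :=
  (isForestOrder_iff.1 h).1

theorem IsForestOrder.isChain_of_isClique {V : Type} {G : SimpleGraph V} {le : V → V → Prop}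
    (h : IsForestOrder G le) {s : Set V} (hs : G.IsClique s) : IsChain le s :=
  fun _ hx _ hy hxy => h.2.2.2.2 (hs hx hy hxy)

theorem treedepthLE_treedepth {W : Type} [Finite W] (G : SimpleGraph W) :
    TreedepthLE G (treedepth G) := by
  let e := Finite.equivFin W
  have hforest : IsForestRel fun u v => e u ≤ e v :=
    ⟨fun _ => le_rfl, fun _ _ _ => le_trans, fun _ _ h h' => e.injective (le_antisymm h h'),
      fun _ _ _ _ _ => le_total _ _⟩
  have hcard : TreedepthLE G (Nat.card W) :=
    ⟨_, isForestOrder_iff.2 ⟨hforest, fun _ _ _ => le_total _ _⟩, fun _ => Set.ncard_le_card _⟩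
  exact Nat.sInf_mem (s := {n | TreedepthLE G n}) ⟨_, hcard⟩

section ForestRel

variable {α : Type*} {le : α → α → Prop} {C : Set α}

theorem IsForestRel.le_or_le_of_isChain (h : IsForestRel le) (hC : IsChain le C) {x y : α}
    (hx : ∃ w ∈ C, le x w) (hy : ∃ w ∈ C, le y w) : le x y ∨ le y x := by
  obtain ⟨w₁, hw₁, hx⟩ := hx
  obtain ⟨w₂, hw₂, hy⟩ := hy
  rcases eq_or_ne w₁ w₂ with rfl | hne
  · exact h.chain w₁ x y hx hy
  rcases hC hw₁ hw₂ hne with h₁₂ | h₂₁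
  · exact h.chain w₂ x y (h.trans hx h₁₂) hy
  · exact h.chain w₁ x y hx (h.trans hy h₂₁)

theorem ncard_lowerClosure_chain_le [Finite α] (htrans : Transitive le) (hC : IsChain le C)
    {n : ℕ} (hn : ∀ v, {u | le u v}.ncard ≤ n) : {u | ∃ w ∈ C, le u w}.ncard ≤ n := by
  rcases C.eq_empty_or_nonempty with rfl | hne
  · simp
  -- a chain element with maximal down-set lies above the whole chain
  obtain ⟨c, hc, hmax⟩ := C.toFinite.exists_maximalFor (fun w => {u | le u w}) C hne
  refine le_trans (Set.ncard_le_ncard ?_) (hn c)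
  rintro u ⟨w, hw, huw⟩
  rcases eq_or_ne w c with rfl | hwc
  · exact huw
  rcases hC hw hc hwc with hwc | hcw
  · exact htrans huw hwc
  · exact hmax hw (fun _ hx => htrans hx hcw) huw

end ForestRel

section Glue

variable {V ι : Type} {S : Set V} {D : ι → Set V}

inductive GlueRel (leS : S → S → Prop) (C : ι → Set S) (leD : ∀ i, D i → D i → Prop) :
    V → V → Prop
  | base {u v : V} (hu : u ∈ S) (hv : v ∈ S) :
      leS ⟨u, hu⟩ ⟨v, hv⟩ → GlueRel leS C leD u v
  | attach {u v : V} (i : ι) (hu : u ∈ S) (w : S) :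
      w ∈ C i → leS ⟨u, hu⟩ w → v ∈ D i → GlueRel leS C leD u v
  | piece {u v : V} (i : ι) (hu : u ∈ D i) (hv : v ∈ D i) :
      leD i ⟨u, hu⟩ ⟨v, hv⟩ → GlueRel leS C leD u v

variable {leS : S → S → Prop} {C : ι → Set S} {leD : ∀ i, D i → D i → Prop} {u v : V}

theorem glueRel_iff_of_mem_base (hDS : ∀ i, Disjoint (D i) S) (hv : v ∈ S) :
    GlueRel leS C leD u v ↔ ∃ hu : u ∈ S, leS ⟨u, hu⟩ ⟨v, hv⟩ := by
  refine ⟨?_, fun ⟨hu, h⟩ => .base hu hv h⟩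
  rintro (⟨hu, _, h⟩ | ⟨i, _, _, _, _, hv'⟩ | ⟨i, _, hv', _⟩)
  · exact ⟨hu, h⟩
  all_goals exact absurd hv ((hDS i).notMem_of_mem_left hv')

theorem glueRel_iff_of_mem_piece (hDS : ∀ i, Disjoint (D i) S) (hDD : Pairwise (Disjoint on D))
    {i : ι} (hv : v ∈ D i) :
    GlueRel leS C leD u v ↔
      (∃ hu : u ∈ S, ∃ w ∈ C i, leS ⟨u, hu⟩ w) ∨ ∃ hu : u ∈ D i, leD i ⟨u, hu⟩ ⟨v, hv⟩ := by
  refine ⟨?_, ?_⟩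
  · rintro (⟨_, hv', _⟩ | ⟨j, hu, w, hw, h, hv'⟩ | ⟨j, hu, hv', h⟩)
    · exact absurd hv' ((hDS i).notMem_of_mem_left hv)
    all_goals obtain rfl := hDD.eq (Set.not_disjoint_iff.2 ⟨v, hv', hv⟩)
    · exact Or.inl ⟨hu, w, hw, h⟩
    · exact Or.inr ⟨hu, h⟩
  · rintro (⟨hu, w, hw, h⟩ | ⟨hu, h⟩)
    · exact .attach i hu w hw h hv
    · exact .piece i hu hv h

theorem GlueRel.mem_of_mem_piece (hDS : ∀ i, Disjoint (D i) S) (hDD : Pairwise (Disjoint on D))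
    (h : GlueRel leS C leD u v) {i : ι} (hu : u ∈ D i) : v ∈ D i := by
  rcases h with ⟨hu', _, _⟩ | ⟨j, hu', _, _, _, _⟩ | ⟨j, hu', hv, _⟩
  · exact absurd hu' ((hDS i).notMem_of_mem_left hu)
  · exact absurd hu' ((hDS i).notMem_of_mem_left hu)
  · obtain rfl := hDD.eq (Set.not_disjoint_iff.2 ⟨u, hu', hu⟩)
    exact hv

theorem isForestRel_glueRel (hS : IsForestRel leS) (hD : ∀ i, IsForestRel (leD i))
    (hC : ∀ i, IsChain leS (C i)) (hcover : ∀ v, v ∈ S ∨ ∃ i, v ∈ D i)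
    (hDS : ∀ i, Disjoint (D i) S) (hDD : Pairwise (Disjoint on D)) :
    IsForestRel (GlueRel leS C leD) where
  refl v := by
    rcases hcover v with hv | ⟨i, hv⟩
    exacts [.base hv hv (hS.refl _), .piece i hv hv ((hD i).refl _)]
  trans u v w huv hvw := by
    rcases hcover w with hw | ⟨i, hw⟩
    · obtain ⟨hv, hvw⟩ := (glueRel_iff_of_mem_base hDS hw).1 hvw
      obtain ⟨hu, huv⟩ := (glueRel_iff_of_mem_base hDS hv).1 huv
      exact .base hu hw (hS.trans huv hvw)
    rw [glueRel_iff_of_mem_piece hDS hDD hw]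
    rcases (glueRel_iff_of_mem_piece hDS hDD hw).1 hvw with ⟨hv, c, hc, hvc⟩ | ⟨hv, hvw⟩
    · obtain ⟨hu, huv⟩ := (glueRel_iff_of_mem_base hDS hv).1 huv
      exact Or.inl ⟨hu, c, hc, hS.trans huv hvc⟩
    rcases (glueRel_iff_of_mem_piece hDS hDD hv).1 huv with huC | ⟨hu, huv⟩
    · exact Or.inl huC
    · exact Or.inr ⟨hu, (hD i).trans huv hvw⟩
  antisymm u v huv hvu := by
    rcases hcover v with hv | ⟨i, hv⟩
    · obtain ⟨hu, huv⟩ := (glueRel_iff_of_mem_base hDS hv).1 huv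
      obtain ⟨_, hvu⟩ := (glueRel_iff_of_mem_base hDS hu).1 hvu
      exact congrArg Subtype.val (hS.antisymm huv hvu)
    have hu := hvu.mem_of_mem_piece hDS hDD hv
    obtain ⟨hu', _⟩ | ⟨_, huv⟩ := (glueRel_iff_of_mem_piece hDS hDD hv).1 huv
    · exact absurd hu' ((hDS i).notMem_of_mem_left hu)
    obtain ⟨hv', _⟩ | ⟨_, hvu⟩ := (glueRel_iff_of_mem_piece hDS hDD hu).1 hvu
    · exact absurd hv' ((hDS i).notMem_of_mem_left hv)
    exact congrArg Subtype.val ((hD i).antisymm huv hvu)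
  chain v x y hxv hyv := by
    rcases hcover v with hv | ⟨i, hv⟩
    · obtain ⟨hx, hxv⟩ := (glueRel_iff_of_mem_base hDS hv).1 hxv
      obtain ⟨hy, hyv⟩ := (glueRel_iff_of_mem_base hDS hv).1 hyv
      exact (hS.chain _ _ _ hxv hyv).imp (.base hx hy) (.base hy hx)
    rcases (glueRel_iff_of_mem_piece hDS hDD hv).1 hxv with ⟨hx, hxC⟩ | ⟨hx, hxv⟩ <;>
      rcases (glueRel_iff_of_mem_piece hDS hDD hv).1 hyv with ⟨hy, hyC⟩ | ⟨hy, hyv⟩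
    · exact (hS.le_or_le_of_isChain (hC i) hxC hyC).imp (.base hx hy) (.base hy hx)
    · obtain ⟨w, hw, hxw⟩ := hxC
      exact Or.inl (.attach i hx w hw hxw hy)
    · obtain ⟨w, hw, hyw⟩ := hyC
      exact Or.inr (.attach i hy w hw hyw hx)
    · exact ((hD i).chain _ _ _ hxv hyv).imp (.piece i hx hy) (.piece i hy hx)

theorem ncard_glueRel_le [Finite V] (hStrans : Transitive leS) (hC : ∀ i, IsChain leS (C i))
    (hDS : ∀ i, Disjoint (D i) S) (hDD : Pairwise (Disjoint on D)) {a b : ℕ}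
    (ha : ∀ x, {y | leS y x}.ncard ≤ a) (hb : ∀ i x, {y | leD i y x}.ncard ≤ b)
    (hv : v ∈ S ∨ ∃ i, v ∈ D i) : {u | GlueRel leS C leD u v}.ncard ≤ a + b := by
  rcases hv with hv | ⟨i, hv⟩
  · have hsub : {u | GlueRel leS C leD u v} ⊆ Subtype.val '' {x | leS x ⟨v, hv⟩} := by
      intro u huv
      obtain ⟨hu, huv⟩ := (glueRel_iff_of_mem_base hDS hv).1 huv
      exact ⟨⟨u, hu⟩, huv, rfl⟩
    calc {u | GlueRel leS C leD u v}.ncard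
        ≤ {x | leS x ⟨v, hv⟩}.ncard := (Set.ncard_le_ncard hsub).trans (Set.ncard_image_le)
      _ ≤ a + b := (ha _).trans (Nat.le_add_right a b)
  have hsub : {u | GlueRel leS C leD u v} ⊆
      Subtype.val '' {x | ∃ w ∈ C i, leS x w} ∪ Subtype.val '' {x | leD i x ⟨v, hv⟩} := by
    intro u huv
    rcases (glueRel_iff_of_mem_piece hDS hDD hv).1 huv with ⟨hu, huC⟩ | ⟨hu, huv⟩
    exacts [Or.inl ⟨⟨u, hu⟩, huC, rfl⟩, Or.inr ⟨⟨u, hu⟩, huv, rfl⟩]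
  calc {u | GlueRel leS C leD u v}.ncard
      ≤ {x | ∃ w ∈ C i, leS x w}.ncard + {x | leD i x ⟨v, hv⟩}.ncard :=
        (Set.ncard_le_ncard hsub).trans <| (Set.ncard_union_le _ _).trans <|
          Nat.add_le_add Set.ncard_image_le Set.ncard_image_le
    _ ≤ a + b := Nat.add_le_add (ncard_lowerClosure_chain_le hStrans (hC i) ha) (hb i _)

end Glue

namespace SimpleGraph.Subgraph

variable {V ι : Type} {G : SimpleGraph V} {H : G.Subgraph} {Hs : ι → G.Subgraph}

theorem mem_verts_or_exists_mem_deleteVerts (hunion : H ⊔ (⨆ i, Hs i) = ⊤) (v : V) :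
    v ∈ H.verts ∨ ∃ i, v ∈ ((Hs i).deleteVerts H.verts).verts := by
  have hv : v ∈ (H ⊔ ⨆ i, Hs i).verts := hunion ▸ trivial
  simp only [verts_sup, verts_iSup, Set.mem_union, Set.mem_iUnion] at hv
  by_cases hvH : v ∈ H.verts
  · exact Or.inl hvH
  · exact Or.inr (hv.resolve_left hvH |>.imp fun i hi => ⟨hi, hvH⟩)

theorem pairwise_disjoint_deleteVerts (hinter : ∀ i j, i ≠ j → Hs i ⊓ Hs j ≤ H) :
    Pairwise (Disjoint on fun i => ((Hs i).deleteVerts H.verts).verts) :=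
  fun i j hij => Set.disjoint_left.2 fun _ hi hj => hi.2 ((hinter i j hij).1 ⟨hi.1, hj.1⟩)

end SimpleGraph.Subgraph

theorem glueRel_or_glueRel_of_adj {V ι : Type} {G : SimpleGraph V} {H : G.Subgraph}
    {Hs : ι → G.Subgraph} (hHind : H.IsInduced) (hunion : H ⊔ (⨆ i, Hs i) = ⊤)
    {leH : H.verts → H.verts → Prop} (hH : IsForestOrder H.coe leH)
    {leD : ∀ i, ((Hs i).deleteVerts H.verts).verts → ((Hs i).deleteVerts H.verts).verts → Prop}
    (hD : ∀ i, IsForestOrder ((Hs i).deleteVerts H.verts).coe (leD i)) ⦃u v : V⦄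
    (huv : G.Adj u v) :
    GlueRel leH (fun i => Subtype.val ⁻¹' (Hs i).verts) leD u v ∨
      GlueRel leH (fun i => Subtype.val ⁻¹' (Hs i).verts) leD v u := by
  have hHs : H.Adj u v ∨ ∃ i, (Hs i).Adj u v := by
    rw [← Subgraph.iSup_adj, ← Subgraph.sup_adj, hunion]
    exact huv
  by_cases hu : u ∈ H.verts <;> by_cases hv : v ∈ H.verts
  · have hHuv : H.coe.Adj ⟨u, hu⟩ ⟨v, hv⟩ := hHind hu hv huv
    exact ((isForestOrder_iff.1 hH).2 hHuv).imp (.base hu hv) (.base hv hu)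
  · obtain ⟨i, hi⟩ := hHs.resolve_left fun h => hv h.snd_mem
    exact Or.inl (.attach i hu ⟨u, hu⟩ hi.fst_mem (hH.isForestRel.refl _) ⟨hi.snd_mem, hv⟩)
  · obtain ⟨i, hi⟩ := hHs.resolve_left fun h => hu h.fst_mem
    exact Or.inr (.attach i hv ⟨v, hv⟩ hi.snd_mem (hH.isForestRel.refl _) ⟨hi.fst_mem, hu⟩)
  · obtain ⟨i, hi⟩ := hHs.resolve_left fun h => hu h.fst_mem
    have hDi : ((Hs i).deleteVerts H.verts).coe.Adj ⟨u, hi.fst_mem, hu⟩ ⟨v, hi.snd_mem, hv⟩ :=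
      Subgraph.deleteVerts_adj.2 ⟨hi.fst_mem, hu, hi.snd_mem, hv, hi⟩
    exact ((isForestOrder_iff.1 (hD i)).2 hDi).imp (.piece i _ _) (.piece i _ _)

theorem treedepth_glue_general {V : Type} [Fintype V] (G : SimpleGraph V) (t : ℕ)
    (H : G.Subgraph) (Hs : Fin t → G.Subgraph)
    (hHind : H.IsInduced)
    (hunion : H ⊔ (⨆ i, Hs i) = ⊤)
    (hinter : ∀ i j, i ≠ j → Hs i ⊓ Hs j ≤ H)
    (hclique : ∀ i, ∀ u ∈ (Hs i).verts ∩ H.verts, ∀ v ∈ (Hs i).verts ∩ H.verts,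
      u ≠ v → G.Adj u v) :
    treedepth G ≤ treedepth H.coe +
      Finset.univ.sup fun i => treedepth ((Hs i).deleteVerts H.verts).coe := by
  obtain ⟨leH, hH, hHcard⟩ := treedepthLE_treedepth H.coe
  choose leD hD hDcard using fun i => treedepthLE_treedepth ((Hs i).deleteVerts H.verts).coe
  have hC (i : Fin t) : IsChain leH (Subtype.val ⁻¹' (Hs i).verts) :=
    hH.isChain_of_isClique fun a ha b hb hab =>
      hHind a.2 b.2 (hclique i a ⟨ha, a.2⟩ b ⟨hb, b.2⟩ (Subtype.coe_ne_coe.2 hab))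
  have hDS (i : Fin t) : Disjoint ((Hs i).deleteVerts H.verts).verts H.verts :=
    Set.disjoint_sdiff_left
  have hcover := Subgraph.mem_verts_or_exists_mem_deleteVerts hunion
  have hDD := Subgraph.pairwise_disjoint_deleteVerts hinter
  refine Nat.sInf_le ⟨_, isForestOrder_iff.2 ⟨?_, glueRel_or_glueRel_of_adj hHind hunion hH hD⟩,
    fun v => ?_⟩
  · exact isForestRel_glueRel hH.isForestRel (fun i => (hD i).isForestRel) hC hcover hDS hDD
  · refine ncard_glueRel_le hH.isForestRel.trans hC hDS hDD hHcard
      (fun i x => (hDcard i x).trans ?_) (hcover v)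
    exact Finset.le_sup (f := fun i => treedepth ((Hs i).deleteVerts H.verts).coe)
      (Finset.mem_univ i)

/-- Let `H, H₁, …, H_t` be induced subgraphs of `G` with `G = H ∪ H₁ ∪ ⋯ ∪ H_t`,
`H_i ∩ H_j ⊆ H` for `i ≠ j`, and `H_i ∩ H` a clique for each `i`.  Then
`td(G) ≤ td(H) + max_i td(H_i − V(H))`. -/
theorem treedepth_glue {V : Type} [Fintype V] (G : SimpleGraph V) (t : ℕ)
    (H : G.Subgraph) (Hs : Fin t → G.Subgraph)
    (hHind : H.IsInduced) (hHsind : ∀ i, (Hs i).IsInduced)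
    (hunion : H ⊔ (⨆ i, Hs i) = ⊤)
    (hinter : ∀ i j, i ≠ j → Hs i ⊓ Hs j ≤ H)
    (hclique : ∀ i, ∀ u ∈ (Hs i).verts ∩ H.verts, ∀ v ∈ (Hs i).verts ∩ H.verts,
      u ≠ v → G.Adj u v) :
    treedepth G ≤ treedepth H.coe +
      Finset.univ.sup fun i => treedepth ((Hs i).deleteVerts H.verts).coe :=
  treedepth_glue_general G t H Hs hHind hunion hinter hclique
end

section
/- Let G be an outerplanar graph, let K ⊆ V(G) induce a connected subgraph of G, and let H be a connected subgraph of G − K such that every vertex of H has a neighbor in K. Then H is a path. -/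
/-- `G` contains `H` as a minor: pairwise disjoint nonempty connected bags in
`G`, one for each vertex of `H`, such that every edge of `H` is realized by an
edge of `G` between the corresponding bags. -/
def HasMinor {V W : Type} (G : SimpleGraph V) (H : SimpleGraph W) : Prop :=
  ∃ μ : W → Set V,
    (∀ x, (μ x).Nonempty) ∧
    (∀ x y, x ≠ y → Disjoint (μ x) (μ y)) ∧
    (∀ x, (G.induce (μ x)).Connected) ∧
    (∀ ⦃x y⦄, H.Adj x y → ∃ u ∈ μ x, ∃ v ∈ μ y, G.Adj u v)

/-- A graph is outerplanar iff it has no `K₄` minor and no `K_{2,3}` minor. -/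
def Outerplanar {V : Type} (G : SimpleGraph V) : Prop :=
  ¬ HasMinor G (SimpleGraph.completeGraph (Fin 4)) ∧
    ¬ HasMinor G (completeBipartiteGraph (Fin 2) (Fin 3))

/-!
Contracting `K` to a single vertex makes it an apex over `H`. A vertex with three neighbours
in `H` then yields a `K_{2,3}` minor (the apex and that vertex against the three neighbours),
and a cycle of `H`, contracted to a triangle, yields together with the apex a `K₄` minor.
Hence `H` is a tree in which no vertex has degree three. In such a tree a longest path visits
every vertex, and, the tree being acyclic, it also carries every edge, so it is all of `H`.
-/

open SimpleGraph

namespace SimpleGraph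

variable {V W : Type}

def apex (F : SimpleGraph W) : SimpleGraph (Option W) where
  Adj
    | none, none => False
    | none, some _ => True
    | some _, none => True
    | some x, some y => F.Adj x y
  symm := ⟨by
    rintro (_ | x) (_ | y) h
    exacts [h, trivial, trivial, F.adj_symm h]⟩
  loopless := ⟨by
    rintro (_ | x) h
    exacts [h, F.loopless.irrefl x h]⟩

instance (F : SimpleGraph W) [DecidableRel F.Adj] : DecidableRel F.apex.Adj
  | none, none => isFalse id
  | none, some _ => isTrue trivial
  | some _, none => isTrue trivial
  | some x, some y => inferInstanceAs (Decidable (F.Adj x y))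

theorem completeGraph_four_isContained_apex :
    completeGraph (Fin 4) ⊑ (completeGraph (Fin 3)).apex :=
  ⟨⟨⟨finSuccEquiv 3, by decide⟩, (finSuccEquiv 3).injective⟩⟩

theorem completeBipartiteGraph_isContained_apex_starGraph :
    completeBipartiteGraph (Fin 2) (Fin 3) ⊑ (starGraph (none : Option (Fin 3))).apex :=
  ⟨⟨⟨Sum.elim ![none, some none] (some ∘ some),
    by simp only [completeBipartiteGraph_adj]; decide⟩, by decide⟩⟩

theorem Connected.induce_image {A : SimpleGraph V} {B : SimpleGraph W} (f : A →g B)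
    {s : Set V} (h : (A.induce s).Connected) : (B.induce (f '' s)).Connected :=
  h.map ⟨fun x : s => ⟨f x, Set.mem_image_of_mem f x.2⟩, fun hxy => f.map_adj hxy⟩
    (by rintro ⟨_, x, hx, rfl⟩; exact ⟨⟨x, hx⟩, rfl⟩)

end SimpleGraph

section Minors

variable {V W W' : Type} {G : SimpleGraph V} {F : SimpleGraph W}

theorem HasMinor.of_isContained {F' : SimpleGraph W'} (h : HasMinor G F) (hF : F' ⊑ F) :
    HasMinor G F' := by
  obtain ⟨μ, hne, hdisj, hconn, hadj⟩ := h
  obtain ⟨f⟩ := hF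
  exact ⟨μ ∘ f, fun _ => hne _, fun _ _ hxy => hdisj _ _ (f.injective.ne hxy),
    fun _ => hconn _, fun _ _ hxy => hadj (f.toHom.map_adj hxy)⟩

theorem SimpleGraph.IsContained.hasMinor (h : F ⊑ G) : HasMinor G F := by
  obtain ⟨f⟩ := h
  refine ⟨fun x => {f x}, fun _ => Set.singleton_nonempty _,
    fun _ _ hxy => Set.disjoint_singleton.2 (f.injective.ne hxy), fun _ => ?_,
    fun _ _ hxy => ⟨_, rfl, _, rfl, f.toHom.map_adj hxy⟩⟩
  rw [induce_singleton_eq_top]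
  exact connected_top

theorem HasMinor.apex {H : G.Subgraph} (hF : HasMinor H.coe F) {K : Set V} (hK : K.Nonempty)
    (hKconn : (G.induce K).Connected) (hdisj : Disjoint H.verts K)
    (hnbr : ∀ v ∈ H.verts, ∃ u ∈ K, G.Adj v u) : HasMinor G F.apex := by
  obtain ⟨μ, hne, hμdisj, hconn, hadj⟩ := hF
  have hsub (x : W) : Subtype.val '' μ x ⊆ H.verts := by
    rintro _ ⟨v, -, rfl⟩
    exact v.2
  have hnbr' (x : W) : ∃ u ∈ K, ∃ v ∈ Subtype.val '' μ x, G.Adj u v := by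
    obtain ⟨v, hv⟩ := hne x
    obtain ⟨u, hu, hvu⟩ := hnbr v v.2
    exact ⟨u, hu, v, Set.mem_image_of_mem _ hv, hvu.symm⟩
  refine ⟨fun o => o.elim K fun x => Subtype.val '' μ x, ?_, ?_, ?_, ?_⟩
  · rintro (_ | x)
    exacts [hK, (hne x).image _]
  · rintro (_ | x) (_ | y) hxy
    · exact absurd rfl hxy
    · exact (hdisj.mono_left (hsub y)).symm
    · exact hdisj.mono_left (hsub x)
    · exact (Set.disjoint_image_iff Subtype.val_injective).2
        (hμdisj x y fun h => hxy (congrArg some h))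
  · rintro (_ | x)
    exacts [hKconn, (hconn x).induce_image H.hom]
  · rintro (_ | x) (_ | y) hxy
    · exact hxy.elim
    · exact hnbr' y
    · obtain ⟨u, hu, v, hv, huv⟩ := hnbr' x
      exact ⟨v, hv, u, hu, huv.symm⟩
    · obtain ⟨u, hu, v, hv, huv⟩ := hadj hxy
      exact ⟨u, Set.mem_image_of_mem _ hu, v, Set.mem_image_of_mem _ hv, huv.adj_sub⟩

end Minors

namespace SimpleGraph

variable {V : Type} {G : SimpleGraph V}

theorem starGraph_isContained_of_adj {v a b c : V} (ha : G.Adj v a) (hb : G.Adj v b)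
    (hc : G.Adj v c) (hab : a ≠ b) (hac : a ≠ c) (hbc : b ≠ c) :
    starGraph (none : Option (Fin 3)) ⊑ G := by
  refine ⟨⟨⟨fun o => o.elim v ![a, b, c], ?_⟩, ?_⟩⟩
  · rintro (_ | i) (_ | j) ⟨hne, hnone⟩
    · exact absurd rfl hne
    · fin_cases j <;> assumption
    · fin_cases i
      exacts [ha.symm, hb.symm, hc.symm]
    · simp at hnone
  · have := ha.ne; have := hb.ne; have := hc.ne
    rintro (_ | i) (_ | j) h
    · rfl
    · fin_cases j <;> simp_all
    · fin_cases i <;> simp_all [eq_comm]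
    · fin_cases i <;> fin_cases j <;> simp_all [eq_comm]

theorem Walk.support_eq_support_dropLast_append {u v : V} {q : G.Walk u v} (hq : ¬ q.Nil) :
    q.support = q.dropLast.support ++ [v] := by
  rw [← Walk.support_concat _ (q.adj_penultimate hq), Walk.concat_dropLast]

theorem hasMinor_completeGraph_three_of_isCycle {u : V} {c : G.Walk u u} (hc : c.IsCycle) :
    HasMinor G (completeGraph (Fin 3)) := by
  cases c with
  | nil => exact absurd Walk.Nil.nil hc.not_nil
  | @cons _ w _ huw p =>
  have hlen := hc.three_le_length
  obtain ⟨hp, -⟩ := (Walk.cons_isCycle_iff p huw).1 hc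
  cases p with
  | nil => simp at hlen
  | @cons _ x _ hwx q =>
  obtain ⟨hq, hwq⟩ := Walk.cons_isPath_iff _ _ |>.1 hp
  have hqnil : ¬ q.Nil := by
    rw [Walk.not_nil_iff_lt_length]
    simp only [Walk.length_cons] at hlen
    omega
  have hpu := q.adj_penultimate hqnil
  -- The triangle's branch sets are `u`, `w` and the rest of the cycle.
  set D : Set V := {z | z ∈ q.dropLast.support}
  have hxD : x ∈ D := q.dropLast.start_mem_support
  have hpD : q.penultimate ∈ D := q.dropLast.end_mem_support
  have hsupp := Walk.support_eq_support_dropLast_append hqnil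
  have huD : u ∉ D := by
    have := hq.support_nodup
    rw [hsupp, List.nodup_append] at this
    exact fun h => this.2.2 _ h _ (List.mem_singleton_self u) rfl
  have hwD : w ∉ D := fun h => hwq (by rw [hsupp]; exact List.mem_append_left _ h)
  refine ⟨![{u}, {w}, D], ?_, ?_, ?_, ?_⟩
  · intro i
    fin_cases i
    exacts [Set.singleton_nonempty _, Set.singleton_nonempty _, ⟨x, hxD⟩]
  · intro i j hij
    fin_cases i <;> fin_cases j <;>
      simp [Set.disjoint_singleton_left, Set.disjoint_singleton_right, huw.ne, huw.ne.symm, huD,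
        hwD] at hij ⊢
  · intro i
    fin_cases i
    · simp
    · simp
    · exact q.dropLast.connected_induce_support
  · have huD' : ∃ z ∈ D, G.Adj u z := ⟨_, hpD, hpu.symm⟩
    have hDu : ∃ z ∈ D, G.Adj z u := ⟨_, hpD, hpu⟩
    have hwD' : ∃ z ∈ D, G.Adj w z := ⟨x, hxD, hwx⟩
    have hDw : ∃ z ∈ D, G.Adj z w := ⟨x, hxD, hwx.symm⟩
    intro i j hij
    fin_cases i <;> fin_cases j <;> simp [huw, huw.symm, huD', hDu, hwD', hDw] at hij ⊢

theorem exists_isPath_forall_length_le [Finite V] [Nonempty V] (G : SimpleGraph V) :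
    ∃ (a b : V) (p : G.Walk a b), p.IsPath ∧
      ∀ (x y : V) (q : G.Walk x y), q.IsPath → q.length ≤ p.length := by
  have := Fintype.ofFinite V
  set S : Set ℕ := {n | ∃ (a b : V) (p : G.Walk a b), p.IsPath ∧ p.length = n}
  have hbdd : BddAbove S :=
    ⟨Fintype.card V, by rintro _ ⟨a, b, p, hp, rfl⟩; exact hp.length_lt.le⟩
  obtain ⟨a, b, p, hp, hlen⟩ : sSup S ∈ S :=
    Nat.sSup_mem ⟨0, Classical.arbitrary V, _, .nil, .nil, rfl⟩ hbdd
  exact ⟨a, b, p, hp, fun x y q hq => hlen ▸ le_csSup hbdd ⟨x, y, q, hq, rfl⟩⟩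

theorem IsAcyclic.adj_of_connected {S : G.Subgraph} (hG : G.IsAcyclic) (hS : S.Connected)
    {u v : V} (hu : u ∈ S.verts) (hv : v ∈ S.verts) (huv : G.Adj u v) : S.Adj u v := by
  by_contra hS'
  refine isBridge_iff.1 (isAcyclic_iff_forall_adj_isBridge.1 hG huv) ?_
  let f : S.coe →g G.deleteEdges {s(u, v)} :=
    ⟨Subtype.val, fun {a b} hab => deleteEdges_adj.2 ⟨hab.adj_sub, fun h => hS' <| by
      rcases Sym2.eq_iff.1 (Set.mem_singleton_iff.1 h) with ⟨ha, hb⟩ | ⟨ha, hb⟩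
      · rwa [← ha, ← hb]
      · rw [← ha, ← hb]
        exact hab.symm⟩⟩
  exact (hS.coe.preconnected ⟨u, hu⟩ ⟨v, hv⟩).map f

theorem Walk.IsPath.mem_support_of_forall_length_le (hG : G.Connected)
    (hclaw : (starGraph (none : Option (Fin 3))).Free G) {a b : V} {p : G.Walk a b}
    (hp : p.IsPath) (hmax : ∀ (x y : V) (q : G.Walk x y), q.IsPath → q.length ≤ p.length)
    (x : V) : x ∈ p.support := by
  by_contra hx
  obtain ⟨⟨⟨y, z⟩, hyz⟩, -, hy, hz⟩ :=
    (hG.preconnected a x).some.exists_boundary_dart {v | v ∈ p.support} p.start_mem_support hx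
  simp only [Set.mem_ofPred_eq] at hy hz
  dsimp only at hyz
  obtain ⟨i, rfl, hi⟩ := Walk.mem_support_iff_exists_getVert.1 hy
  rcases Nat.eq_zero_or_pos i with rfl | hipos
  · rw [Walk.getVert_zero] at hyz
    simpa using hmax _ _ (Walk.cons hyz.symm p) (hp.cons hz)
  rcases hi.lt_or_eq with hilt | rfl
  · have hprev : G.Adj (p.getVert i) (p.getVert (i - 1)) := by
      simpa [Nat.sub_add_cancel hipos] using (p.adj_getVert_succ (i := i - 1) (by omega)).symm
    have hne : p.getVert (i - 1) ≠ p.getVert (i + 1) := fun h => by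
      have := hp.getVert_injOn (by simp; omega) (by simp; omega) h
      omega
    have hz' (j : ℕ) : p.getVert j ≠ z := fun h => hz (h ▸ p.getVert_mem_support j)
    exact hclaw (starGraph_isContained_of_adj hprev (p.adj_getVert_succ hilt) hyz hne
      (hz' _) (hz' _))
  · rw [Walk.getVert_length] at hyz
    simpa using hmax _ _ (p.concat hyz) (hp.concat hz hyz)

theorem IsTree.exists_iso_pathGraph [Finite V] (hG : G.IsTree)
    (hclaw : (starGraph (none : Option (Fin 3))).Free G) :
    ∃ n, Nonempty (G ≃g pathGraph n) := by
  classical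
  have := hG.1.nonempty
  obtain ⟨a, b, p, hp, hmax⟩ := exists_isPath_forall_length_le G
  have hspan := hp.mem_support_of_forall_length_le hG.1 hclaw hmax
  have htop : p.toSubgraph = ⊤ := by
    ext u v
    · simpa using hspan u
    · exact ⟨Subgraph.Adj.adj_sub, hG.2.adj_of_connected p.toSubgraph_connected
        (p.mem_verts_toSubgraph.2 (hspan u)) (p.mem_verts_toSubgraph.2 (hspan v))⟩
  have e := hp.pathGraphIsoToSubgraph
  rw [htop] at e
  exact ⟨_, ⟨Subgraph.topIso.symm.trans e.symm⟩⟩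

end SimpleGraph

/-- Let `G` be outerplanar, let `K` induce a connected subgraph of `G`, and let
`H` be a connected subgraph of `G − K` each of whose vertices has a neighbor in
`K`.  Then `H` is a path. -/
theorem outerplanar_neighborhood_path {V : Type} [Fintype V] (G : SimpleGraph V)
    (hG : Outerplanar G) (K : Set V) (hK : K.Nonempty)
    (hKconn : (G.induce K).Connected) (H : G.Subgraph)
    (hdisj : Disjoint H.verts K) (hHconn : H.Connected)
    (hnbr : ∀ v ∈ H.verts, ∃ u ∈ K, G.Adj v u) :
    ∃ n : ℕ, Nonempty (H.coe ≃g SimpleGraph.pathGraph n) := by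
  have hclaw : (starGraph (none : Option (Fin 3))).Free H.coe := fun h =>
    hG.2 <| (h.hasMinor.apex hK hKconn hdisj hnbr).of_isContained
      completeBipartiteGraph_isContained_apex_starGraph
  have hacyclic : H.coe.IsAcyclic := fun _ _ hc =>
    hG.1 <| ((hasMinor_completeGraph_three_of_isCycle hc).apex hK hKconn hdisj hnbr).of_isContained
      completeGraph_four_isContained_apex
  exact IsTree.exists_iso_pathGraph ⟨hHconn.coe, hacyclic⟩ hclaw
end
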